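/- arXiv:2104.04865 — 8 statements merged into one kernel-verified Lean document; each statement's English description precedes it below -/
import Mathlib

section
/- Let (Z, I, I') be a coupling of probability spaces X and X' with coupling operator P = I'* ∘ I, and let L : L²(X;ℝ) → L²(X;ℝ) and R : L²(X';ℝ) → L²(X';ℝ) be Markov embeddings. Then there exists a Markov embedding T : L²(Z;ℝ) → L²(Z;ℝ) with T ∘ I = I ∘ L and T ∘ I' = I' ∘ R if and only if R* ∘ P ∘ L = P (R* the Hilbert-space adjoint of R). In this case T is unique and satisfies T((If)·(I'g)) = (I(Lf))·(I'(Rg)) for all f ∈ L∞(X;ℝ) and g ∈ L∞(X';ℝ). -/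
/-!
A Markov embedding is multiplicative on bounded functions: positivity turns `(u - t)² ≥ 0` into
`(Ju)² ≤ J(u²)`, and both sides have integral `‖u‖²`. Hence an intertwining `T` sends
`If · I'g` to `I(Lf) · I'(Rg)`; this determines `T` on a dense span, and comparing inner products
gives `R* P L = P`. Conversely, `R* P L = P` says that the prescribed values `I(Lf) · I'(Rg)` have
the same Gram matrix as the products `If · I'g`, so they define a linear isometry `T` of `L²(Z)`.
It is unital and multiplicative on the dense algebra spanned by the products; approximating `|x|`
uniformly by polynomials on a common bound of `u` and `Tu` gives `T|u| = |Tu|` there, hence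
everywhere, and positivity and preservation of integrals follow.
-/

open MeasureTheory Filter
open scoped ENNReal

noncomputable section

/-- The constant-one function as an element of `Lp`. -/
def lpOne {X : Type*} {msX : MeasurableSpace X} (μ : Measure X) (p : ℝ≥0∞) : Lp ℝ p μ := by
  classical exact if h : MemLp (fun _ : X => (1 : ℝ)) p μ then h.toLp _ else 0

/-- An element of `L²` that is (essentially) bounded, i.e. belongs to `L∞`. -/
def BddAE {X : Type*} {msX : MeasurableSpace X} {μ : Measure X} (f : Lp ℝ 2 μ) : Prop :=
  ∃ C : ℝ, ∀ᵐ x ∂μ, |f x| ≤ C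

/-- A Markov operator between the `L²`-spaces of two measure spaces: a positive unital
integral-preserving bounded linear operator. -/
structure MarkovOperator {X Z : Type*} {msX : MeasurableSpace X} {msZ : MeasurableSpace Z}
    (μ : Measure X) (ν : Measure Z) where
  P : Lp ℝ 2 μ →L[ℝ] Lp ℝ 2 ν
  pos : ∀ f : Lp ℝ 2 μ, 0 ≤ f → 0 ≤ P f
  unital : P (lpOne μ 2) = lpOne ν 2
  integral_eq : ∀ f : Lp ℝ 2 μ, ∫ z, P f z ∂ν = ∫ x, f x ∂μ

/-- A Markov embedding between the `L²`-spaces of two measure spaces: a positive unital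
integral-preserving linear isometry commuting with `|·|`. -/
structure MarkovEmbedding {X Z : Type*} {msX : MeasurableSpace X} {msZ : MeasurableSpace Z}
    (μ : Measure X) (ν : Measure Z) where
  J : Lp ℝ 2 μ →ₗᵢ[ℝ] Lp ℝ 2 ν
  pos : ∀ f : Lp ℝ 2 μ, 0 ≤ f → 0 ≤ J f
  unital : J (lpOne μ 2) = lpOne ν 2
  integral_eq : ∀ f : Lp ℝ 2 μ, ∫ z, J f z ∂ν = ∫ x, f x ∂μ
  abs_eq : ∀ f : Lp ℝ 2 μ, J |f| = |J f|

/-- `(Z, I, I')` is a coupling: the span of the products `If · I'g`, for `f, g` bounded,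
is dense in `L²(Z)`. -/
def IsCoupling {X X' Z : Type*} {msX : MeasurableSpace X} {msX' : MeasurableSpace X'}
    {msZ : MeasurableSpace Z} {μ : Measure X} {μ' : Measure X'} {ν : Measure Z}
    (I : MarkovEmbedding μ ν) (I' : MarkovEmbedding μ' ν) : Prop :=
  Dense (Submodule.span ℝ {u : Lp ℝ 2 ν | ∃ (f : Lp ℝ 2 μ) (g : Lp ℝ 2 μ'),
    BddAE f ∧ BddAE g ∧ (u : Z → ℝ) =ᵐ[ν] fun z => I.J f z * I'.J g z} :
      Set (Lp ℝ 2 ν))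

variable {X X' Z : Type*} {msX : MeasurableSpace X} {msX' : MeasurableSpace X'}
  {msZ : MeasurableSpace Z} {μ : Measure X} {μ' : Measure X'} {ν : Measure Z}

/-- `T` intertwines the coupling `(I, I')` with the pair of embeddings `(L, R)`. -/
def Intertwines (I : MarkovEmbedding μ ν) (I' : MarkovEmbedding μ' ν)
    (L : MarkovEmbedding μ μ) (R : MarkovEmbedding μ' μ') (T : MarkovEmbedding ν ν) : Prop :=
  (∀ f : Lp ℝ 2 μ, T.J (I.J f) = I.J (L.J f)) ∧
    ∀ g : Lp ℝ 2 μ', T.J (I'.J g) = I'.J (R.J g)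

open scoped RealInnerProductSpace

section LpMul

variable {Ω : Type*} {mΩ : MeasurableSpace Ω} {κ : Measure Ω}

lemma coeFn_lpOne [IsFiniteMeasure κ] : (lpOne κ 2 : Ω → ℝ) =ᵐ[κ] fun _ => 1 := by
  rw [lpOne, dif_pos (memLp_const 1)]
  exact MemLp.coeFn_toLp _

lemma inner_eq_integral_mul (u v : Lp ℝ 2 κ) : ⟪u, v⟫ = ∫ z, u z * v z ∂κ := by
  simp [L2.inner_def, mul_comm]

lemma inner_lpOne [IsFiniteMeasure κ] (u : Lp ℝ 2 κ) : ⟪u, lpOne κ 2⟫ = ∫ z, u z ∂κ := by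
  rw [inner_eq_integral_mul]
  exact integral_congr_ae (coeFn_lpOne.mono fun z hz => by simp [hz])

lemma norm_le_of_ae_abs_le [IsProbabilityMeasure κ] {u : Lp ℝ 2 κ} {C : ℝ} (hC : 0 ≤ C)
    (h : ∀ᵐ z ∂κ, |u z| ≤ C) : ‖u‖ ≤ C := by
  simpa [measureUnivNNReal] using
    Lp.norm_le_of_ae_bound (f := u) hC (by simpa only [Real.norm_eq_abs] using h)

lemma BddAE.exists_nonneg {u : Lp ℝ 2 κ} (hu : BddAE u) :
    ∃ C, 0 ≤ C ∧ ∀ᵐ z ∂κ, |u z| ≤ C := by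
  obtain ⟨C, hC⟩ := hu
  exact ⟨max C 0, le_max_right _ _, hC.mono fun z hz => hz.trans (le_max_left _ _)⟩

variable (κ) in
def bddSubmodule : Submodule ℝ (Lp ℝ 2 κ) where
  carrier := {u | BddAE u}
  zero_mem' := ⟨0, (Lp.coeFn_zero ℝ 2 κ).mono fun z hz => by rw [hz]; simp⟩
  add_mem' := by
    rintro u v ⟨C, hC⟩ ⟨D, hD⟩
    refine ⟨C + D, ?_⟩
    filter_upwards [Lp.coeFn_add u v, hC, hD] with z e hu hv
    rw [e, Pi.add_apply]
    exact (abs_add_le _ _).trans (add_le_add hu hv)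
  smul_mem' := by
    rintro c u ⟨C, hC⟩
    refine ⟨|c| * C, ?_⟩
    filter_upwards [Lp.coeFn_smul c u, hC] with z e hu
    rw [e, Pi.smul_apply, smul_eq_mul, abs_mul]
    exact mul_le_mul_of_nonneg_left hu (abs_nonneg c)

lemma BddAE.add {u v : Lp ℝ 2 κ} (hu : BddAE u) (hv : BddAE v) : BddAE (u + v) :=
  (bddSubmodule κ).add_mem hu hv

lemma BddAE.sub {u v : Lp ℝ 2 κ} (hu : BddAE u) (hv : BddAE v) : BddAE (u - v) :=
  (bddSubmodule κ).sub_mem hu hv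

lemma bddAE_lpOne [IsFiniteMeasure κ] : BddAE (lpOne κ 2) :=
  ⟨1, coeFn_lpOne.mono fun z hz => by simp [hz]⟩

lemma dense_setOf_bddAE : Dense {u : Lp ℝ 2 κ | BddAE u} := by
  refine (Lp.simpleFunc.dense (E := ℝ) (p := 2) (μ := κ) ENNReal.ofNat_ne_top).mono ?_
  intro u hu
  obtain ⟨C, hC⟩ := (Lp.simpleFunc.toSimpleFunc ⟨u, hu⟩).exists_forall_norm_le
  exact ⟨C, (Lp.simpleFunc.toSimpleFunc_eq_toFun ⟨u, hu⟩).mono fun z hz => hz ▸ hC z⟩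

lemma continuous_abs_lp {p : ℝ≥0∞} [Fact (1 ≤ p)] : Continuous (fun u : Lp ℝ p κ => |u|) :=
  continuous_id.sup continuous_neg

-- `0` when the pointwise product is not square integrable
def lpMul (u v : Lp ℝ 2 κ) : Lp ℝ 2 κ := by
  classical exact if h : MemLp (fun z => u z * v z) 2 κ then h.toLp _ else 0

lemma coeFn_lpMul {u v : Lp ℝ 2 κ} (h : MemLp (fun z => u z * v z) 2 κ) :
    (lpMul u v : Ω → ℝ) =ᵐ[κ] fun z => u z * v z := by
  rw [lpMul, dif_pos h]
  exact h.coeFn_toLp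

lemma lpMul_eq_of_ae {u v w : Lp ℝ 2 κ} (h : (w : Ω → ℝ) =ᵐ[κ] fun z => u z * v z) :
    lpMul u v = w :=
  Lp.ext ((coeFn_lpMul ((Lp.memLp w).ae_eq h)).trans h.symm)

lemma lpMul_comm (u v : Lp ℝ 2 κ) : lpMul u v = lpMul v u := by
  by_cases h : MemLp (fun z => u z * v z) 2 κ
  · exact (lpMul_eq_of_ae ((coeFn_lpMul h).mono fun z hz => hz.trans (mul_comm _ _))).symm
  · rw [lpMul, lpMul, dif_neg h, dif_neg (by simpa only [mul_comm] using h)]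

lemma BddAE.memLp_mul {v : Lp ℝ 2 κ} (hv : BddAE v) (u : Lp ℝ 2 κ) :
    MemLp (fun z => u z * v z) 2 κ := by
  obtain ⟨C, hC⟩ := hv
  refine (Lp.memLp u).of_le_mul (c := C)
    ((Lp.aestronglyMeasurable u).mul (Lp.aestronglyMeasurable v)) ?_
  filter_upwards [hC] with z hz
  rw [norm_mul, mul_comm, Real.norm_eq_abs]
  exact mul_le_mul_of_nonneg_right hz (norm_nonneg _)

lemma BddAE.coeFn_lpMul {v : Lp ℝ 2 κ} (hv : BddAE v) (u : Lp ℝ 2 κ) :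
    (lpMul u v : Ω → ℝ) =ᵐ[κ] fun z => u z * v z :=
  _root_.coeFn_lpMul (hv.memLp_mul u)

lemma BddAE.lpMul {u v : Lp ℝ 2 κ} (hu : BddAE u) (hv : BddAE v) : BddAE (lpMul u v) := by
  obtain ⟨C, hC0, hC⟩ := hu.exists_nonneg
  obtain ⟨D, hD⟩ := id hv
  refine ⟨C * D, ?_⟩
  filter_upwards [hv.coeFn_lpMul u, hC, hD] with z e hu hv
  rw [e, abs_mul]
  exact mul_le_mul hu hv (abs_nonneg _) hC0

lemma lpMul_lpOne [IsFiniteMeasure κ] (u : Lp ℝ 2 κ) : lpMul u (lpOne κ 2) = u :=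
  lpMul_eq_of_ae (coeFn_lpOne.mono fun z hz => by simp [hz])

lemma lpMul_zero (u : Lp ℝ 2 κ) : lpMul u 0 = 0 :=
  lpMul_eq_of_ae ((Lp.coeFn_zero ℝ 2 κ).mono fun z hz => by
    simp only [hz, Pi.zero_apply, mul_zero])

lemma lpMul_add {v w : Lp ℝ 2 κ} (hv : BddAE v) (hw : BddAE w) (u : Lp ℝ 2 κ) :
    lpMul u (v + w) = lpMul u v + lpMul u w := by
  refine lpMul_eq_of_ae ?_
  filter_upwards [Lp.coeFn_add (lpMul u v) (lpMul u w), Lp.coeFn_add v w, hv.coeFn_lpMul u,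
    hw.coeFn_lpMul u] with z e1 e2 e3 e4
  simp only [e1, e2, e3, e4, Pi.add_apply, mul_add]

lemma lpMul_smul {v : Lp ℝ 2 κ} (hv : BddAE v) (c : ℝ) (u : Lp ℝ 2 κ) :
    lpMul u (c • v) = c • lpMul u v := by
  refine lpMul_eq_of_ae ?_
  filter_upwards [Lp.coeFn_smul c (lpMul u v), Lp.coeFn_smul c v, hv.coeFn_lpMul u]
    with z e1 e2 e3
  simp only [e1, e2, e3, Pi.smul_apply, smul_eq_mul]
  ring

lemma integrable_mul (u v : Lp ℝ 2 κ) : Integrable (fun z => u z * v z) κ := by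
  simpa [mul_comm] using L2.integrable_inner (𝕜 := ℝ) u v

lemma integral_lpMul_self {u : Lp ℝ 2 κ} (hu : BddAE u) : ∫ z, lpMul u u z ∂κ = ⟪u, u⟫ := by
  rw [inner_eq_integral_mul]
  exact integral_congr_ae (hu.coeFn_lpMul u)

lemma lpMul_polarization {u v : Lp ℝ 2 κ} (hu : BddAE u) (hv : BddAE v) :
    (4 : ℝ) • lpMul u v = lpMul (u + v) (u + v) - lpMul (u - v) (u - v) := by
  have huv := hu.add hv
  have huv' := hu.sub hv
  refine Lp.ext ?_
  filter_upwards [Lp.coeFn_smul (4 : ℝ) (lpMul u v), hv.coeFn_lpMul u,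
    Lp.coeFn_sub (lpMul (u + v) (u + v)) (lpMul (u - v) (u - v)), huv.coeFn_lpMul (u + v),
    huv'.coeFn_lpMul (u - v), Lp.coeFn_add u v, Lp.coeFn_sub u v] with z e1 e2 e3 e4 e5 e6 e7
  simp only [e1, e2, e3, e4, e5, e6, e7, Pi.smul_apply, Pi.sub_apply, Pi.add_apply, smul_eq_mul]
  ring

lemma lpMul_lpMul_lpMul_comm {a b c d : Lp ℝ 2 κ} (hb : BddAE b) (hc : BddAE c)
    (hd : BddAE d) :
    lpMul (lpMul a b) (lpMul c d) = lpMul (lpMul a c) (lpMul b d) := by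
  refine lpMul_eq_of_ae ?_
  filter_upwards [(hb.lpMul hd).coeFn_lpMul (lpMul a c), hb.coeFn_lpMul a, hd.coeFn_lpMul c,
    hc.coeFn_lpMul a, hd.coeFn_lpMul b] with z e1 e2 e3 e4 e5
  rw [e1, e2, e3, e4, e5]
  ring

lemma inner_lpMul_lpMul_comm {a b c d : Lp ℝ 2 κ} (hb : BddAE b) (hc : BddAE c)
    (hd : BddAE d) : ⟪lpMul a b, lpMul c d⟫ = ⟪lpMul a c, lpMul b d⟫ := by
  rw [inner_eq_integral_mul, inner_eq_integral_mul]
  refine integral_congr_ae ?_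
  filter_upwards [hb.coeFn_lpMul a, hd.coeFn_lpMul c, hc.coeFn_lpMul a, hd.coeFn_lpMul b]
    with z e1 e2 e3 e4
  rw [e1, e2, e3, e4]
  ring

end LpMul

lemma mul_self_le_of_forall_rat {a b : ℝ} (h : ∀ t : ℚ, -(t : ℝ) ^ 2 ≤ b - 2 * t * a) :
    a * a ≤ b := by
  have := Rat.denseRange_cast.induction_on (p := fun t : ℝ => -t ^ 2 ≤ b - 2 * t * a) a
    (isClosed_le (by fun_prop) (by fun_prop)) h
  nlinarith

namespace MarkovEmbedding

variable {Ω Ω' : Type*} {mΩ : MeasurableSpace Ω} {mΩ' : MeasurableSpace Ω'} {κ : Measure Ω}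
  {η : Measure Ω'}

@[ext]
lemma ext {J J' : MarkovEmbedding κ η} (h : J.J = J'.J) : J = J' := by
  cases J; cases J'; congr

variable [IsFiniteMeasure κ] [IsFiniteMeasure η] (J : MarkovEmbedding κ η)

lemma const_le_map {c : ℝ} {u : Lp ℝ 2 κ} (h : ∀ᵐ x ∂κ, c ≤ u x) :
    ∀ᵐ z ∂η, c ≤ J.J u z := by
  have hpos : 0 ≤ u - c • lpOne κ 2 := by
    rw [← Lp.coeFn_nonneg]
    filter_upwards [Lp.coeFn_sub u (c • lpOne κ 2), Lp.coeFn_smul c (lpOne κ 2), coeFn_lpOne, h]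
      with x e1 e2 e3 hx
    rw [Pi.zero_apply, e1, Pi.sub_apply, e2, Pi.smul_apply, e3, smul_eq_mul, mul_one]
    linarith
  have hJ := J.pos _ hpos
  rw [map_sub, map_smul, J.unital, ← Lp.coeFn_nonneg] at hJ
  filter_upwards [hJ, Lp.coeFn_sub (J.J u) (c • lpOne η 2), Lp.coeFn_smul c (lpOne η 2),
    coeFn_lpOne] with z hz e1 e2 e3
  rw [Pi.zero_apply, e1, Pi.sub_apply, e2, Pi.smul_apply, e3, smul_eq_mul, mul_one] at hz
  linarith

lemma bddAE_map {u : Lp ℝ 2 κ} (hu : BddAE u) : BddAE (J.J u) := by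
  obtain ⟨C, hC⟩ := hu
  have h := J.const_le_map (c := -C) (u := -|u|) (by
    filter_upwards [Lp.coeFn_neg |u|, Lp.coeFn_abs u, hC] with x e1 e2 hx
    rw [e1, Pi.neg_apply, e2]
    linarith)
  rw [map_neg, J.abs_eq] at h
  refine ⟨C, ?_⟩
  filter_upwards [h, Lp.coeFn_neg |J.J u|, Lp.coeFn_abs (J.J u)] with z hz e1 e2
  rw [e1, Pi.neg_apply, e2] at hz
  linarith

lemma mul_self_le_map_lpMul_self {u : Lp ℝ 2 κ} (hu : BddAE u) :
    ∀ᵐ z ∂η, J.J u z * J.J u z ≤ J.J (lpMul u u) z := by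
  have key (t : ℚ) : ∀ᵐ z ∂η, -(t : ℝ) ^ 2 ≤ J.J (lpMul u u) z - 2 * t * J.J u z := by
    have h := J.const_le_map (c := -(t : ℝ) ^ 2) (u := lpMul u u - (2 * t : ℝ) • u) (by
      filter_upwards [Lp.coeFn_sub (lpMul u u) ((2 * t : ℝ) • u), Lp.coeFn_smul (2 * t : ℝ) u,
        hu.coeFn_lpMul u] with x e1 e2 e3
      simp only [e1, e2, e3, Pi.sub_apply, Pi.smul_apply, smul_eq_mul]
      nlinarith [sq_nonneg (u x - t)])
    rw [map_sub, map_smul] at h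
    filter_upwards [h, Lp.coeFn_sub (J.J (lpMul u u)) ((2 * t : ℝ) • J.J u),
      Lp.coeFn_smul (2 * t : ℝ) (J.J u)] with z hz e1 e2
    rwa [e1, Pi.sub_apply, e2, Pi.smul_apply, smul_eq_mul] at hz
  filter_upwards [ae_all_iff.2 key] with z hz
  exact mul_self_le_of_forall_rat hz

lemma map_lpMul_self {u : Lp ℝ 2 κ} (hu : BddAE u) :
    J.J (lpMul u u) = lpMul (J.J u) (J.J u) := by
  have hint : Integrable (fun z => J.J (lpMul u u) z - J.J u z * J.J u z) η :=
    ((Lp.memLp _).integrable one_le_two).sub (integrable_mul _ _)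
  have hzero : ∫ z, (J.J (lpMul u u) z - J.J u z * J.J u z) ∂η = 0 := by
    rw [integral_sub ((Lp.memLp _).integrable one_le_two) (integrable_mul _ _), J.integral_eq,
      integral_lpMul_self hu, ← inner_eq_integral_mul, LinearIsometry.inner_map_map, sub_self]
  have hnonneg : 0 ≤ᵐ[η] fun z => J.J (lpMul u u) z - J.J u z * J.J u z :=
    (J.mul_self_le_map_lpMul_self hu).mono fun z hz => sub_nonneg.2 hz
  refine (lpMul_eq_of_ae ?_).symm
  filter_upwards [(integral_eq_zero_iff_of_nonneg_ae hnonneg hint).1 hzero] with z hz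
  simpa [sub_eq_zero] using hz

lemma map_lpMul {u v : Lp ℝ 2 κ} (hu : BddAE u) (hv : BddAE v) :
    J.J (lpMul u v) = lpMul (J.J u) (J.J v) := by
  refine smul_right_injective _ (four_ne_zero (α := ℝ)) ?_
  dsimp only
  rw [← map_smul, lpMul_polarization hu hv, lpMul_polarization (J.bddAE_map hu) (J.bddAE_map hv),
    map_sub, J.map_lpMul_self (hu.add hv), J.map_lpMul_self (hu.sub hv), map_add, map_sub]

end MarkovEmbedding

section IsometryExtension

variable {𝕜 E F : Type*}

theorem LinearIsometry.exists_extend_of_dense [NontriviallyNormedField 𝕜]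
    [NormedAddCommGroup E] [NormedSpace 𝕜 E] [NormedAddCommGroup F] [NormedSpace 𝕜 F]
    [CompleteSpace F] {K : Submodule 𝕜 E} (hK : Dense (K : Set E)) (f : K →ₗᵢ[𝕜] F) :
    ∃ T : E →ₗᵢ[𝕜] F, ∀ x : K, T x = f x := by
  have hdense : DenseRange K.subtypeL := by simpa [DenseRange] using hK
  have hind : IsUniformInducing K.subtypeL := isUniformEmbedding_subtype_val.isUniformInducing
  set g := f.toContinuousLinearMap.extend K.subtypeL
  have hg (x : K) : g x = f x := ContinuousLinearMap.extend_eq _ hdense hind x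
  have hnorm : (fun y => ‖g y‖) = fun y => ‖y‖ := by
    refine Continuous.ext_on hK (by fun_prop) (by fun_prop) fun y hy => ?_
    simpa using congrArg norm (hg ⟨y, hy⟩)
  exact ⟨⟨g.toLinearMap, congrFun hnorm⟩, hg⟩

open Finsupp in
theorem exists_linearIsometry_of_inner_eq [RCLike 𝕜] [NormedAddCommGroup E]
    [InnerProductSpace 𝕜 E] [NormedAddCommGroup F] [InnerProductSpace 𝕜 F] [CompleteSpace F]
    {ι : Type*} {v : ι → E} {w : ι → F} (hv : Dense (Submodule.span 𝕜 (Set.range v) : Set E))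
    (h : ∀ i j, inner 𝕜 (w i) (w j) = inner 𝕜 (v i) (v j)) :
    ∃ T : E →ₗᵢ[𝕜] F, ∀ i, T (v i) = w i := by
  set V := linearCombination 𝕜 v
  set W := linearCombination 𝕜 w
  have hnorm (l : ι →₀ 𝕜) : ‖W l‖ = ‖V l‖ := by
    have : inner 𝕜 (W l) (W l) = inner 𝕜 (V l) (V l) := by
      simp only [W, V, linearCombination_apply, Finsupp.sum_inner, Finsupp.inner_sum,
        inner_smul_left, inner_smul_right, h]
    rw [@norm_eq_sqrt_re_inner 𝕜, @norm_eq_sqrt_re_inner 𝕜, this]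
  have hker : LinearMap.ker V ≤ LinearMap.ker W := fun l hl => by
    rw [LinearMap.mem_ker, ← norm_eq_zero, hnorm, norm_eq_zero, ← LinearMap.mem_ker]
    exact hl
  let T₀ : LinearMap.range V →ₗ[𝕜] F :=
    (LinearMap.ker V).liftQ W hker ∘ₗ V.quotKerEquivRange.symm.toLinearMap
  have hT₀ (l : ι →₀ 𝕜) : T₀ (V.rangeRestrict l) = W l := by
    have : V.quotKerEquivRange.symm (V.rangeRestrict l) = Submodule.Quotient.mk l :=
      V.quotKerEquivRange_symm_apply_image l _
    simp [T₀, this]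
  have hT₀norm (x : LinearMap.range V) : ‖T₀ x‖ = ‖x‖ := by
    obtain ⟨l, rfl⟩ := V.surjective_rangeRestrict x
    rw [hT₀, hnorm]
    rfl
  have hdense : Dense (LinearMap.range V : Set E) := by
    rwa [range_linearCombination]
  obtain ⟨T, hT⟩ := LinearIsometry.exists_extend_of_dense hdense ⟨T₀, hT₀norm⟩
  refine ⟨T, fun i => ?_⟩
  have := hT (V.rangeRestrict (single i 1))
  simp only [LinearIsometry.coe_mk, hT₀] at this
  simpa [V, W] using this

theorem ContinuousLinearMap.adjoint_comp_adjoint_comp_comp_eq_iff {𝕜 E F G : Type*} [RCLike 𝕜]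
    [NormedAddCommGroup E] [InnerProductSpace 𝕜 E] [NormedAddCommGroup F]
    [InnerProductSpace 𝕜 F] [CompleteSpace F] [NormedAddCommGroup G] [InnerProductSpace 𝕜 G]
    [CompleteSpace G] (A : E →L[𝕜] G) (B : F →L[𝕜] G) (L : E →L[𝕜] E) (R : F →L[𝕜] F) :
    (adjoint R).comp (((adjoint B).comp A).comp L) = (adjoint B).comp A ↔
      ∀ x y, inner 𝕜 (A (L x)) (B (R y)) = inner 𝕜 (A x) (B y) := by
  simp only [ContinuousLinearMap.ext_iff, comp_apply]
  refine forall_congr' fun x => ⟨fun h y => ?_, fun h => ext_inner_right 𝕜 fun y => ?_⟩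
  · simpa only [adjoint_inner_left] using congrArg (inner 𝕜 · y) h
  · simpa only [adjoint_inner_left] using h y

end IsometryExtension

section MultiplicativeIsometry

open Polynomial

variable {Ω Ω' : Type*} {mΩ : MeasurableSpace Ω} {mΩ' : MeasurableSpace Ω'} {κ : Measure Ω}
  {η : Measure Ω'}

lemma map_lpMul_of_mem_span (T : Lp ℝ 2 κ →ₗᵢ[ℝ] Lp ℝ 2 η) {G : Set (Lp ℝ 2 κ)}
    (hbdd : ∀ u ∈ Submodule.span ℝ G, BddAE u ∧ BddAE (T u))
    (hG : ∀ u ∈ G, ∀ v ∈ G, lpMul u v ∈ Submodule.span ℝ G ∧ T (lpMul u v) = lpMul (T u) (T v))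
    {u v : Lp ℝ 2 κ} (hu : u ∈ Submodule.span ℝ G) (hv : v ∈ Submodule.span ℝ G) :
    lpMul u v ∈ Submodule.span ℝ G ∧ T (lpMul u v) = lpMul (T u) (T v) := by
  have extend {u : Lp ℝ 2 κ}
      (hu : ∀ v ∈ G, lpMul u v ∈ Submodule.span ℝ G ∧ T (lpMul u v) = lpMul (T u) (T v))
      {v : Lp ℝ 2 κ} (hv : v ∈ Submodule.span ℝ G) :
      lpMul u v ∈ Submodule.span ℝ G ∧ T (lpMul u v) = lpMul (T u) (T v) := by
    induction hv using Submodule.span_induction with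
    | mem v hv => exact hu v hv
    | zero => simp [lpMul_zero]
    | add v w hv hw ihv ihw =>
      rw [lpMul_add (hbdd v hv).1 (hbdd w hw).1, map_add, map_add,
        lpMul_add (hbdd v hv).2 (hbdd w hw).2, ihv.2, ihw.2]
      exact ⟨add_mem ihv.1 ihw.1, rfl⟩
    | smul c v hv ihv =>
      rw [lpMul_smul (hbdd v hv).1, map_smul, map_smul, lpMul_smul (hbdd v hv).2, ihv.2]
      exact ⟨Submodule.smul_mem _ c ihv.1, rfl⟩
  refine extend (fun w hw => ?_) hv
  rw [lpMul_comm, lpMul_comm (T u)]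
  exact extend (hG w hw) hu

lemma exists_mem_ae_eq_eval (T : Lp ℝ 2 κ →ₗᵢ[ℝ] Lp ℝ 2 η) {A : Submodule ℝ (Lp ℝ 2 κ)}
    [IsFiniteMeasure κ] [IsFiniteMeasure η]
    (hbdd : ∀ u ∈ A, BddAE u ∧ BddAE (T u))
    (hmul : ∀ u ∈ A, ∀ v ∈ A, lpMul u v ∈ A ∧ T (lpMul u v) = lpMul (T u) (T v))
    (hone : lpOne κ 2 ∈ A) (hT1 : T (lpOne κ 2) = lpOne η 2) {u : Lp ℝ 2 κ} (hu : u ∈ A)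
    (p : ℝ[X]) : ∃ w ∈ A, ((w : Ω → ℝ) =ᵐ[κ] fun z => p.eval (u z)) ∧
      ((T w : Ω' → ℝ) =ᵐ[η] fun z => p.eval (T u z)) := by
  induction p using Polynomial.induction_on with
  | C a =>
    refine ⟨a • lpOne κ 2, A.smul_mem a hone, ?_, ?_⟩
    · filter_upwards [Lp.coeFn_smul a (lpOne κ 2), coeFn_lpOne] with z e1 e2
      simp [e1, e2]
    · rw [map_smul, hT1]
      filter_upwards [Lp.coeFn_smul a (lpOne η 2), coeFn_lpOne] with z e1 e2
      simp [e1, e2]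
  | add p q hp hq =>
    obtain ⟨w₁, hw₁, e₁, f₁⟩ := hp
    obtain ⟨w₂, hw₂, e₂, f₂⟩ := hq
    refine ⟨w₁ + w₂, A.add_mem hw₁ hw₂, ?_, ?_⟩
    · filter_upwards [Lp.coeFn_add w₁ w₂, e₁, e₂] with z e e₁ e₂
      rw [e, Pi.add_apply, e₁, e₂, eval_add]
    · rw [map_add]
      filter_upwards [Lp.coeFn_add (T w₁) (T w₂), f₁, f₂] with z e f₁ f₂
      rw [e, Pi.add_apply, f₁, f₂, eval_add]
  | monomial n a h =>
    obtain ⟨w, hw, e, f⟩ := h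
    refine ⟨lpMul w u, (hmul w hw u hu).1, ?_, ?_⟩
    · filter_upwards [(hbdd u hu).1.coeFn_lpMul w, e] with z e₁ e₂
      simp [e₁, e₂, pow_succ, mul_assoc]
    · rw [(hmul w hw u hu).2]
      filter_upwards [(hbdd u hu).2.coeFn_lpMul (T w), f] with z f₁ f₂
      simp [f₁, f₂, pow_succ, mul_assoc]

lemma norm_sub_abs_le_of_ae_eq_eval [IsProbabilityMeasure κ] {p : ℝ[X]} {M ε : ℝ}
    (hε : 0 ≤ ε) (hp : ∀ x ∈ Set.Icc (-M) M, |p.eval x - (|x|)| < ε) {u w : Lp ℝ 2 κ}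
    (hu : ∀ᵐ z ∂κ, |u z| ≤ M) (hw : (w : Ω → ℝ) =ᵐ[κ] fun z => p.eval (u z)) :
    ‖w - |u|‖ ≤ ε := by
  refine norm_le_of_ae_abs_le hε ?_
  filter_upwards [Lp.coeFn_sub w |u|, Lp.coeFn_abs u, hw, hu] with z e₁ e₂ e₃ hz
  rw [e₁, Pi.sub_apply, e₂, e₃]
  exact (hp (u z) (abs_le.1 hz)).le

lemma map_abs_of_mem (T : Lp ℝ 2 κ →ₗᵢ[ℝ] Lp ℝ 2 η) {A : Submodule ℝ (Lp ℝ 2 κ)}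
    [IsProbabilityMeasure κ] [IsProbabilityMeasure η]
    (hbdd : ∀ u ∈ A, BddAE u ∧ BddAE (T u))
    (hmul : ∀ u ∈ A, ∀ v ∈ A, lpMul u v ∈ A ∧ T (lpMul u v) = lpMul (T u) (T v))
    (hone : lpOne κ 2 ∈ A) (hT1 : T (lpOne κ 2) = lpOne η 2) {u : Lp ℝ 2 κ} (hu : u ∈ A) :
    T |u| = |T u| := by
  obtain ⟨C, hC⟩ := (hbdd u hu).1
  obtain ⟨D, hD⟩ := (hbdd u hu).2
  refine eq_of_forall_dist_le fun ε hε => ?_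
  obtain ⟨p, hp⟩ := exists_polynomial_near_of_continuousOn (-max C D) (max C D) abs
    continuous_abs.continuousOn (ε / 2) (half_pos hε)
  obtain ⟨w, -, hw, hTw⟩ := exists_mem_ae_eq_eval T hbdd hmul hone hT1 hu p
  have h₁ := norm_sub_abs_le_of_ae_eq_eval (half_pos hε).le hp
    (hC.mono fun z hz => hz.trans (le_max_left C D)) hw
  have h₂ := norm_sub_abs_le_of_ae_eq_eval (half_pos hε).le hp
    (hD.mono fun z hz => hz.trans (le_max_right C D)) hTw
  calc dist (T |u|) |T u| ≤ dist (T |u|) (T w) + dist (T w) |T u| := dist_triangle _ _ _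
    _ = ‖w - |u|‖ + ‖T w - |T u|‖ := by rw [T.dist_map, dist_comm, dist_eq_norm, dist_eq_norm]
    _ ≤ ε := by linarith

theorem exists_markovEmbedding_of_map_lpMul [IsProbabilityMeasure κ] [IsProbabilityMeasure η]
    (T : Lp ℝ 2 κ →ₗᵢ[ℝ] Lp ℝ 2 η) {A : Submodule ℝ (Lp ℝ 2 κ)} (hA : Dense (A : Set (Lp ℝ 2 κ)))
    (hbdd : ∀ u ∈ A, BddAE u ∧ BddAE (T u))
    (hmul : ∀ u ∈ A, ∀ v ∈ A, lpMul u v ∈ A ∧ T (lpMul u v) = lpMul (T u) (T v))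
    (hone : lpOne κ 2 ∈ A) (hT1 : T (lpOne κ 2) = lpOne η 2) :
    ∃ J : MarkovEmbedding κ η, J.J = T := by
  have habs (u : Lp ℝ 2 κ) : T |u| = |T u| := by
    refine congrFun (Continuous.ext_on hA (T.continuous.comp continuous_abs_lp)
      (continuous_abs_lp.comp T.continuous) fun u hu => ?_) u
    exact map_abs_of_mem T hbdd hmul hone hT1 hu
  refine ⟨⟨T, fun f hf => ?_, hT1, fun f => ?_, habs⟩, rfl⟩
  · rw [← abs_of_nonneg hf, habs]
    exact abs_nonneg _
  · rw [← inner_lpOne, ← inner_lpOne, ← hT1, T.inner_map_map]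

end MultiplicativeIsometry

section Coupling

def couplingProd (I : MarkovEmbedding μ ν) (I' : MarkovEmbedding μ' ν)
    (p : {f : Lp ℝ 2 μ // BddAE f} × {g : Lp ℝ 2 μ' // BddAE g}) : Lp ℝ 2 ν :=
  lpMul (I.J p.1) (I'.J p.2)

variable {I : MarkovEmbedding μ ν} {I' : MarkovEmbedding μ' ν} {L : MarkovEmbedding μ μ}
  {R : MarkovEmbedding μ' μ'} {T : MarkovEmbedding ν ν}

lemma Intertwines.inner_map_map (hT : Intertwines I I' L R T) (f : Lp ℝ 2 μ) (g : Lp ℝ 2 μ') :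
    ⟪I.J (L.J f), I'.J (R.J g)⟫ = ⟪I.J f, I'.J g⟫ := by
  rw [← hT.1, ← hT.2, T.J.inner_map_map]

lemma intertwines_of_bddAE (h₁ : ∀ f, BddAE f → T.J (I.J f) = I.J (L.J f))
    (h₂ : ∀ g, BddAE g → T.J (I'.J g) = I'.J (R.J g)) : Intertwines I I' L R T :=
  ⟨congrFun (Continuous.ext_on dense_setOf_bddAE (T.J.continuous.comp I.J.continuous)
      (I.J.continuous.comp L.J.continuous) h₁),
    congrFun (Continuous.ext_on dense_setOf_bddAE (T.J.continuous.comp I'.J.continuous)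
      (I'.J.continuous.comp R.J.continuous) h₂)⟩

lemma lpMul_lpMul_map_map [IsFiniteMeasure μ] [IsFiniteMeasure μ'] [IsFiniteMeasure ν]
    {f f' : Lp ℝ 2 μ} {g g' : Lp ℝ 2 μ'} (hf : BddAE f) (hf' : BddAE f') (hg : BddAE g)
    (hg' : BddAE g') :
    lpMul (lpMul (I.J f) (I'.J g)) (lpMul (I.J f') (I'.J g')) =
      lpMul (I.J (lpMul f f')) (I'.J (lpMul g g')) := by
  rw [lpMul_lpMul_lpMul_comm (I'.bddAE_map hg) (I.bddAE_map hf') (I'.bddAE_map hg'),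
    I.map_lpMul hf hf', I'.map_lpMul hg hg']

lemma inner_lpMul_map_map [IsFiniteMeasure μ] [IsFiniteMeasure μ'] [IsFiniteMeasure ν]
    {f f' : Lp ℝ 2 μ} {g g' : Lp ℝ 2 μ'} (hf : BddAE f) (hf' : BddAE f') (hg : BddAE g)
    (hg' : BddAE g') :
    ⟪lpMul (I.J f) (I'.J g), lpMul (I.J f') (I'.J g')⟫ =
      ⟪I.J (lpMul f f'), I'.J (lpMul g g')⟫ := by
  rw [inner_lpMul_lpMul_comm (I'.bddAE_map hg) (I.bddAE_map hf') (I'.bddAE_map hg'),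
    I.map_lpMul hf hf', I'.map_lpMul hg hg']

lemma IsCoupling.dense_span_range [IsFiniteMeasure μ'] [IsFiniteMeasure ν] (hC : IsCoupling I I') :
    Dense (Submodule.span ℝ (Set.range (couplingProd I I')) : Set (Lp ℝ 2 ν)) := by
  unfold IsCoupling at hC
  convert hC using 4
  ext u
  constructor
  · rintro ⟨⟨⟨f, hf⟩, ⟨g, hg⟩⟩, rfl⟩
    exact ⟨f, g, hf, hg, (I'.bddAE_map hg).coeFn_lpMul _⟩
  · rintro ⟨f, g, hf, hg, hu⟩
    exact ⟨(⟨f, hf⟩, ⟨g, hg⟩), lpMul_eq_of_ae hu⟩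

lemma Intertwines.map_lpMul [IsFiniteMeasure μ] [IsFiniteMeasure μ'] [IsFiniteMeasure ν]
    (hT : Intertwines I I' L R T) {f : Lp ℝ 2 μ} {g : Lp ℝ 2 μ'}
    (hf : BddAE f) (hg : BddAE g) :
    T.J (lpMul (I.J f) (I'.J g)) = lpMul (I.J (L.J f)) (I'.J (R.J g)) := by
  rw [T.map_lpMul (I.bddAE_map hf) (I'.bddAE_map hg), hT.1, hT.2]

lemma Intertwines.unique [IsFiniteMeasure μ] [IsFiniteMeasure μ'] [IsFiniteMeasure ν]
    (hC : IsCoupling I I') {T' : MarkovEmbedding ν ν}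
    (hT : Intertwines I I' L R T) (hT' : Intertwines I I' L R T') : T = T' := by
  refine MarkovEmbedding.ext (LinearIsometry.ext (congrFun (Continuous.ext_on hC.dense_span_range
    T.J.continuous T'.J.continuous (LinearMap.eqOn_span (f := T.J.toLinearMap) ?_))))
  rintro _ ⟨⟨⟨f, hf⟩, ⟨g, hg⟩⟩, rfl⟩
  exact (hT.map_lpMul hf hg).trans (hT'.map_lpMul hf hg).symm

lemma bddAE_of_mem_span_range_couplingProd [IsFiniteMeasure μ] [IsFiniteMeasure μ']
    [IsFiniteMeasure ν] {u : Lp ℝ 2 ν} (hu : u ∈ Submodule.span ℝ (Set.range (couplingProd I I'))) :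
    BddAE u := by
  refine (Submodule.span_le (p := bddSubmodule ν)).2 ?_ hu
  rintro _ ⟨⟨⟨f, hf⟩, ⟨g, hg⟩⟩, rfl⟩
  exact (I.bddAE_map hf).lpMul (I'.bddAE_map hg)

lemma exists_linearIsometry_map_couplingProd [IsFiniteMeasure μ] [IsFiniteMeasure μ']
    [IsFiniteMeasure ν] (hC : IsCoupling I I')
    (h : ∀ f g, ⟪I.J (L.J f), I'.J (R.J g)⟫ = ⟪I.J f, I'.J g⟫) :
    ∃ T₀ : Lp ℝ 2 ν →ₗᵢ[ℝ] Lp ℝ 2 ν, ∀ f g, BddAE f → BddAE g →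
      T₀ (lpMul (I.J f) (I'.J g)) = lpMul (I.J (L.J f)) (I'.J (R.J g)) := by
  let σ (p : {f : Lp ℝ 2 μ // BddAE f} × {g : Lp ℝ 2 μ' // BddAE g}) :
      {f : Lp ℝ 2 μ // BddAE f} × {g : Lp ℝ 2 μ' // BddAE g} :=
    (⟨L.J p.1, L.bddAE_map p.1.2⟩, ⟨R.J p.2, R.bddAE_map p.2.2⟩)
  have hgram : ∀ p q, ⟪couplingProd I I' (σ p), couplingProd I I' (σ q)⟫ =
      ⟪couplingProd I I' p, couplingProd I I' q⟫ := by
    rintro ⟨⟨f, hf⟩, ⟨g, hg⟩⟩ ⟨⟨f', hf'⟩, ⟨g', hg'⟩⟩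
    simp only [couplingProd, σ]
    rw [inner_lpMul_map_map (L.bddAE_map hf) (L.bddAE_map hf') (R.bddAE_map hg)
      (R.bddAE_map hg'), ← L.map_lpMul hf hf', ← R.map_lpMul hg hg', h,
      inner_lpMul_map_map hf hf' hg hg']
  obtain ⟨T₀, hT₀⟩ := exists_linearIsometry_of_inner_eq hC.dense_span_range hgram
  exact ⟨T₀, fun f g hf hg => hT₀ (⟨f, hf⟩, ⟨g, hg⟩)⟩

theorem exists_intertwines [IsProbabilityMeasure μ] [IsProbabilityMeasure μ']
    [IsProbabilityMeasure ν] (hC : IsCoupling I I')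
    (h : ∀ f g, ⟪I.J (L.J f), I'.J (R.J g)⟫ = ⟪I.J f, I'.J g⟫) :
    ∃ T, Intertwines I I' L R T := by
  obtain ⟨T₀, hT₀⟩ := exists_linearIsometry_map_couplingProd hC h
  set A := Submodule.span ℝ (Set.range (couplingProd I I'))
  have hmaps : A ≤ A.comap T₀.toLinearMap := by
    refine Submodule.span_le.2 ?_
    rintro _ ⟨⟨⟨f, hf⟩, ⟨g, hg⟩⟩, rfl⟩
    exact Submodule.subset_span
      ⟨(⟨L.J f, L.bddAE_map hf⟩, ⟨R.J g, R.bddAE_map hg⟩), (hT₀ f g hf hg).symm⟩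
  have hbdd (u) (hu : u ∈ A) : BddAE u ∧ BddAE (T₀ u) :=
    ⟨bddAE_of_mem_span_range_couplingProd hu, bddAE_of_mem_span_range_couplingProd (hmaps hu)⟩
  have hG : ∀ u ∈ Set.range (couplingProd I I'), ∀ v ∈ Set.range (couplingProd I I'),
      lpMul u v ∈ A ∧ T₀ (lpMul u v) = lpMul (T₀ u) (T₀ v) := by
    rintro _ ⟨⟨⟨f, hf⟩, ⟨g, hg⟩⟩, rfl⟩ _ ⟨⟨⟨f', hf'⟩, ⟨g', hg'⟩⟩, rfl⟩
    simp only [couplingProd]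
    rw [lpMul_lpMul_map_map hf hf' hg hg', hT₀ _ _ (hf.lpMul hf') (hg.lpMul hg'),
      hT₀ f g hf hg, hT₀ f' g' hf' hg', L.map_lpMul hf hf', R.map_lpMul hg hg',
      lpMul_lpMul_map_map (L.bddAE_map hf) (L.bddAE_map hf') (R.bddAE_map hg) (R.bddAE_map hg')]
    exact ⟨Submodule.subset_span ⟨(⟨_, hf.lpMul hf'⟩, ⟨_, hg.lpMul hg'⟩), rfl⟩, rfl⟩
  have hone : lpMul (I.J (lpOne μ 2)) (I'.J (lpOne μ' 2)) = lpOne ν 2 := by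
    rw [I.unital, I'.unital, lpMul_lpOne]
  have hT1 : T₀ (lpOne ν 2) = lpOne ν 2 := by
    rw [← hone, hT₀ _ _ bddAE_lpOne bddAE_lpOne, L.unital, R.unital]
  obtain ⟨J, rfl⟩ := exists_markovEmbedding_of_map_lpMul T₀ hC.dense_span_range hbdd
    (fun u hu v hv => map_lpMul_of_mem_span T₀ hbdd hG hu hv)
    (hone ▸ Submodule.subset_span ⟨(⟨_, bddAE_lpOne⟩, ⟨_, bddAE_lpOne⟩), rfl⟩) hT1
  refine ⟨J, intertwines_of_bddAE (fun f hf => ?_) (fun g hg => ?_)⟩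
  · simpa [I'.unital, R.unital, lpMul_lpOne] using hT₀ f _ hf bddAE_lpOne
  · simpa [I.unital, L.unital, lpMul_comm (lpOne ν 2), lpMul_lpOne] using hT₀ _ g bddAE_lpOne hg

end Coupling

/-- Given a coupling `(Z, I, I')` with coupling operator `P = I'* ∘ I`
and Markov embeddings `L, R`, there is a Markov embedding `T` on `L²(Z;ℝ)` with
`T ∘ I = I ∘ L` and `T ∘ I' = I' ∘ R` if and only if `R* ∘ P ∘ L = P`; in this case `T`
is unique and satisfies `T((If)·(I'g)) = (I(Lf))·(I'(Rg))` for bounded `f, g`. -/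
theorem exists_joining_iff (hPμ : IsProbabilityMeasure μ) (hPμ' : IsProbabilityMeasure μ')
    (hPν : IsProbabilityMeasure ν)
    (I : MarkovEmbedding μ ν) (I' : MarkovEmbedding μ' ν) (hC : IsCoupling I I')
    (L : MarkovEmbedding μ μ) (R : MarkovEmbedding μ' μ') :
    ((∃ T : MarkovEmbedding ν ν, Intertwines I I' L R T) ↔
      (ContinuousLinearMap.adjoint R.J.toContinuousLinearMap).comp
          (((ContinuousLinearMap.adjoint I'.J.toContinuousLinearMap).comp
              I.J.toContinuousLinearMap).comp L.J.toContinuousLinearMap) =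
        (ContinuousLinearMap.adjoint I'.J.toContinuousLinearMap).comp
          I.J.toContinuousLinearMap) ∧
    (∀ T T' : MarkovEmbedding ν ν,
      Intertwines I I' L R T → Intertwines I I' L R T' → T = T') ∧
    (∀ T : MarkovEmbedding ν ν, Intertwines I I' L R T →
      ∀ (f : Lp ℝ 2 μ) (g : Lp ℝ 2 μ'), BddAE f → BddAE g →
        ∀ u v : Lp ℝ 2 ν,
          ((u : Z → ℝ) =ᵐ[ν] fun z => I.J f z * I'.J g z) →
          ((v : Z → ℝ) =ᵐ[ν] fun z => I.J (L.J f) z * I'.J (R.J g) z) →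
          T.J u = v) := by
  have := hPμ; have := hPμ'; have := hPν
  have hP := ContinuousLinearMap.adjoint_comp_adjoint_comp_comp_eq_iff I.J.toContinuousLinearMap
    I'.J.toContinuousLinearMap L.J.toContinuousLinearMap R.J.toContinuousLinearMap
  simp only [LinearIsometry.coe_toContinuousLinearMap] at hP
  refine ⟨⟨fun ⟨T, hT⟩ => hP.2 hT.inner_map_map, fun h => exists_intertwines hC (hP.1 h)⟩,
    fun T T' hT hT' => hT.unique hC hT', fun T hT f g hf hg u v hu hv => ?_⟩
  rw [← lpMul_eq_of_ae hu, ← lpMul_eq_of_ae hv, hT.map_lpMul hf hg]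

end
end

section
/- For a compact Hausdorff space Ω the following assertions are equivalent: (i) C(Ω;ℝ) is Dedekind complete, i.e., every nonempty subset of C(Ω;ℝ) that has an upper bound in C(Ω;ℝ) has a least upper bound in C(Ω;ℝ); (ii) Ω is extremally disconnected. -/
/-!
If `C(Ω;ℝ)` is Dedekind complete and `U` is open, the supremum of the continuous functions
`f ≤ 1` vanishing off `U` is `1` on `closure U` and `≤ 0` off it (complete regularity), so
`closure U` is the preimage of `(1/2, ∞)` under it, an open set.

Conversely, let `φ` be the pointwise supremum of a bounded family of continuous functions. It is
lower semicontinuous, so in an extremally disconnected space the closures `C a` of its level sets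
`{φ > a}` are clopen. The function `x ↦ inf {a | x ∉ C a}` then has open sub- and superlevel sets,
hence is continuous, and it is the least continuous majorant of `φ`.
-/

open Set

section

variable {X : Type*} [TopologicalSpace X]

theorem CompletelyRegularSpace.exists_continuousMap_nonneg [CompletelyRegularSpace X]
    {x : X} {K : Set X} (hK : IsClosed K) (hx : x ∉ K) :
    ∃ g : C(X, ℝ), 0 ≤ g ∧ g x = 0 ∧ EqOn g 1 K := by
  obtain ⟨f, hf, hfx, hfK⟩ := CompletelyRegularSpace.completely_regular x K hK hx
  exact ⟨⟨fun y => f y, continuous_subtype_val.comp hf⟩, fun y => (f y).2.1,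
    by simp [hfx], fun y hy => by simp [hfK hy]⟩

namespace ContinuousMap

def leOneVanishingOff (U : Set X) : Set C(X, ℝ) := {f | f ≤ 1 ∧ ∀ x ∉ U, f x = 0}

theorem zero_mem_leOneVanishingOff (U : Set X) : 0 ∈ leOneVanishingOff U :=
  ⟨zero_le_one, fun _ _ => rfl⟩

theorem one_mem_upperBounds_leOneVanishingOff (U : Set X) :
    1 ∈ upperBounds (leOneVanishingOff U) :=
  fun _ hf => hf.1

theorem one_le_of_mem_upperBounds_leOneVanishingOff [CompletelyRegularSpace X] {U : Set X}
    (hU : IsOpen U) {b : C(X, ℝ)} (hb : b ∈ upperBounds (leOneVanishingOff U)) {x : X}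
    (hx : x ∈ closure U) : 1 ≤ b x := by
  suffices hU1 : U ⊆ {y | 1 ≤ b y} from
    closure_minimal hU1 (isClosed_le continuous_const b.continuous) hx
  intro y hy
  obtain ⟨g, hg0, hgy, hgU⟩ :=
    CompletelyRegularSpace.exists_continuousMap_nonneg hU.isClosed_compl (not_not_intro hy)
  have hmem : 1 - g ∈ leOneVanishingOff U :=
    ⟨sub_le_self 1 hg0, fun z hz => by simp [hgU hz]⟩
  simpa [hgy] using hb hmem y

theorem le_zero_of_isLUB_leOneVanishingOff [CompletelyRegularSpace X] {U : Set X}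
    {b : C(X, ℝ)} (hb : IsLUB (leOneVanishingOff U) b) {x : X} (hx : x ∉ closure U) :
    b x ≤ 0 := by
  obtain ⟨g, hg0, hgx, hgU⟩ :=
    CompletelyRegularSpace.exists_continuousMap_nonneg isClosed_closure hx
  have hub : g ∈ upperBounds (leOneVanishingOff U) := by
    intro f ⟨hf1, hf0⟩ y
    by_cases hy : y ∈ U
    · simpa [hgU (subset_closure hy)] using hf1 y
    · simpa [hf0 y hy] using hg0 y
  simpa [hgx] using hb.2 hub x

end ContinuousMap

open ContinuousMap in
theorem ExtremallyDisconnected.of_exists_isLUB [CompletelyRegularSpace X]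
    (h : ∀ S : Set C(X, ℝ), S.Nonempty → BddAbove S → ∃ b, IsLUB S b) :
    ExtremallyDisconnected X where
  open_closure U hU := by
    obtain ⟨b, hb⟩ := h (leOneVanishingOff U) ⟨0, zero_mem_leOneVanishingOff U⟩
      ⟨1, one_mem_upperBounds_leOneVanishingOff U⟩
    have hclosure : closure U = b ⁻¹' Ioi (1 / 2) := by
      ext x
      by_cases hx : x ∈ closure U
      · have := one_le_of_mem_upperBounds_leOneVanishingOff hU hb.1 hx
        simp only [hx, mem_preimage, mem_Ioi, true_iff]
        linarith
      · have := le_zero_of_isLUB_leOneVanishingOff hb hx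
        simp only [hx, mem_preimage, mem_Ioi, false_iff, not_lt]
        linarith
    rw [hclosure]
    exact isOpen_Ioi.preimage b.continuous

theorem continuous_sInf_setOf_notMem_of_isClopen {C : ℝ → Set X} (hanti : Antitone C)
    (hC : ∀ a, IsClopen (C a)) (hne : ∀ x, {a | x ∉ C a}.Nonempty)
    (hbdd : ∀ x, BddBelow {a | x ∉ C a}) : Continuous fun x => sInf {a | x ∉ C a} := by
  refine continuous_iff_lower_upperSemicontinuous.2 ⟨?_, ?_⟩
  · rw [lowerSemicontinuous_iff_isOpen_preimage]
    intro r
    have : (fun x => sInf {a | x ∉ C a}) ⁻¹' Ioi r = ⋃ a ∈ Ioi r, C a := by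
      ext x
      simp only [mem_preimage, mem_Ioi, mem_iUnion, exists_prop]
      constructor
      · intro hx
        obtain ⟨a, hra, hax⟩ := exists_between hx
        exact ⟨a, hra, by_contra fun h => (csInf_le (hbdd x) h).not_gt hax⟩
      · rintro ⟨a, hra, hx⟩
        refine hra.trans_le (le_csInf (hne x) fun a' ha' => ?_)
        by_contra! h
        exact ha' (hanti h.le hx)
    rw [this]
    exact isOpen_biUnion fun a _ => (hC a).isOpen
  · rw [upperSemicontinuous_iff_isOpen_preimage]
    intro r
    have : (fun x => sInf {a | x ∉ C a}) ⁻¹' Iio r = ⋃ a ∈ Iio r, (C a)ᶜ := by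
      ext x
      simp only [mem_preimage, mem_Iio, mem_iUnion, mem_compl_iff, exists_prop]
      constructor
      · intro hx
        obtain ⟨a, hx, har⟩ := exists_lt_of_csInf_lt (hne x) hx
        exact ⟨a, har, hx⟩
      · rintro ⟨a, har, hx⟩
        exact (csInf_le (hbdd x) hx).trans_lt har
    rw [this]
    exact isOpen_biUnion fun a _ => (hC a).isClosed.isOpen_compl

theorem ExtremallyDisconnected.exists_isLeast_continuousMap_ge [ExtremallyDisconnected X]
    {φ : X → ℝ} (hφ : LowerSemicontinuous φ) {u : C(X, ℝ)} (hu : φ ≤ u) :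
    ∃ b : C(X, ℝ), IsLeast {c : C(X, ℝ) | φ ≤ c} b := by
  set C : ℝ → Set X := fun a => closure {x | a < φ x}
  have hanti : Antitone C := fun a a' haa' => closure_mono fun x hx => haa'.trans_lt hx
  have hC : ∀ a, IsClopen (C a) := fun a =>
    ⟨isClosed_closure, ExtremallyDisconnected.open_closure _ (hφ.isOpen_preimage a)⟩
  have hle_of_notMem : ∀ {x a}, x ∉ C a → φ x ≤ a := fun hx =>
    not_lt.1 fun h => hx (subset_closure h)
  have notMem_of_gt : ∀ c : C(X, ℝ), φ ≤ c → ∀ {x a}, c x < a → x ∉ C a := by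
    intro c hc x a ha hx
    have hCa : C a ⊆ {y | a ≤ c y} :=
      closure_minimal (fun y hy => hy.le.trans (hc y)) (isClosed_le continuous_const c.continuous)
    exact (hCa hx).not_gt ha
  have hne : ∀ x, {a | x ∉ C a}.Nonempty := fun x => ⟨u x + 1, notMem_of_gt u hu (lt_add_one _)⟩
  have hbdd : ∀ x, BddBelow {a | x ∉ C a} := fun x => ⟨φ x, fun _ => hle_of_notMem⟩
  refine ⟨⟨_, continuous_sInf_setOf_notMem_of_isClopen hanti hC hne hbdd⟩,
    fun x => le_csInf (hne x) fun _ => hle_of_notMem, fun c hc x => ?_⟩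
  exact le_of_forall_gt_imp_ge_of_dense fun a ha => csInf_le (hbdd x) (notMem_of_gt c hc ha)

theorem ExtremallyDisconnected.exists_isLUB [ExtremallyDisconnected X] {S : Set C(X, ℝ)}
    (hne : S.Nonempty) (hbdd : BddAbove S) : ∃ b, IsLUB S b := by
  have := hne.to_subtype
  obtain ⟨u, hu⟩ := hbdd
  have hbddx : ∀ x, BddAbove (range fun f : S => f.1 x) := by
    intro x
    exact ⟨u x, by rintro _ ⟨f, rfl⟩; exact hu f.2 x⟩
  set φ : X → ℝ := fun x => ⨆ f : S, f.1 x
  have hupper : upperBounds S = {c : C(X, ℝ) | φ ≤ c} := by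
    ext c
    simp only [mem_upperBounds, ContinuousMap.le_def, mem_ofPred_eq, Pi.le_def, φ,
      ciSup_le_iff (hbddx _), Subtype.forall]
    exact ⟨fun h x f hf => h f hf x, fun h f hf x => h x f hf⟩
  have hφ : LowerSemicontinuous φ :=
    lowerSemicontinuous_ciSup hbddx fun f => f.1.continuous.lowerSemicontinuous
  rw [IsLUB, hupper]
  exact exists_isLeast_continuousMap_ge hφ (hupper ▸ hu)

end

/-- For a compact Hausdorff space `Ω`, the lattice `C(Ω;ℝ)` (with the
pointwise order) is Dedekind complete if and only if `Ω` is extremally disconnected. -/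
theorem dedekindComplete_iff_extremallyDisconnected
    {Ω : Type*} [TopologicalSpace Ω] [CompactSpace Ω] [T2Space Ω] :
    (∀ S : Set C(Ω, ℝ), S.Nonempty → BddAbove S → ∃ b, IsLUB S b) ↔
      ExtremallyDisconnected Ω :=
  ⟨ExtremallyDisconnected.of_exists_isLUB, fun _ _ => ExtremallyDisconnected.exists_isLUB⟩
end

section
/- (Wright's Lemma) Let Ω be a compact Hausdorff extremally disconnected space, let (f_i)_{i∈I} be a nonempty family in C(Ω;ℝ) that is bounded from below by some element of C(Ω;ℝ), and let f ∈ C(Ω;ℝ) be the greatest lower bound of {f_i : i ∈ I} in C(Ω;ℝ). Then the set {ω ∈ Ω : f(ω) = inf_{i∈I} f_i(ω)} is residual in Ω; in particular f(ω) = inf_{i∈I} f_i(ω) for all ω in a dense subset of Ω. -/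
/-!
If `F + ε ≤ f i` for all `i` on a nonempty open set `U`, then, `Ω` being extremally
disconnected, `closure U` is clopen, so `F + ε • 𝟙_{closure U}` is a continuous lower bound of
the family strictly above `F` somewhere, which contradicts maximality of `F`. Hence each closed set
`{ω | ∀ i, F ω + 1/(n+1) ≤ f i ω}` is nowhere dense, and their countable union is the set where
`F` differs from the pointwise infimum. A compact Hausdorff space is Baire, so its complement is
residual and dense.
-/

open Set

theorem exists_nat_forall_add_one_div_le {ι : Type*} [Nonempty ι] {u : ι → ℝ} {a : ℝ}
    (ha : ∀ i, a ≤ u i) (hne : a ≠ ⨅ i, u i) : ∃ n : ℕ, ∀ i, a + 1 / (n + 1) ≤ u i := by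
  have hlt : a < ⨅ i, u i := (le_ciInf ha).lt_of_ne hne
  obtain ⟨n, hn⟩ := exists_nat_one_div_lt (sub_pos.2 hlt)
  refine ⟨n, fun i => ?_⟩
  have hinf : ⨅ i, u i ≤ u i := ciInf_le ⟨a, forall_mem_range.2 ha⟩ i
  linarith

section

variable {Ω I : Type*} [TopologicalSpace Ω]

theorem isClosed_setOf_forall_add_le (f : I → C(Ω, ℝ)) (F : C(Ω, ℝ)) (ε : ℝ) :
    IsClosed {ω | ∀ i, F ω + ε ≤ f i ω} := by
  simp only [ofPred_forall]
  exact isClosed_iInter fun i => isClosed_le (by fun_prop) (f i).continuous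

theorem isNowhereDense_setOf_forall_add_le_of_isGLB [ExtremallyDisconnected Ω]
    {f : I → C(Ω, ℝ)} {F : C(Ω, ℝ)} (hF : IsGLB (range f) F) {ε : ℝ} (hε : 0 < ε) :
    IsNowhereDense {ω | ∀ i, F ω + ε ≤ f i ω} := by
  set S := {ω | ∀ i, F ω + ε ≤ f i ω}
  have hS : IsClosed S := isClosed_setOf_forall_add_le f F ε
  rw [hS.isNowhereDense_iff]
  set K := closure (interior S)
  have hK : IsClopen K := ⟨isClosed_closure, ExtremallyDisconnected.open_closure _ isOpen_interior⟩
  have hKS : K ⊆ S := hS.closure_subset_iff.2 interior_subset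
  let G : C(Ω, ℝ) := F + ⟨K.indicator fun _ => ε, hK.continuous_indicator continuous_const⟩
  have hG : G ∈ lowerBounds (range f) := by
    rintro _ ⟨i, rfl⟩ ω
    by_cases hω : ω ∈ K
    · simpa [G, hω] using hKS hω i
    · simpa [G, hω] using hF.1 ⟨i, rfl⟩ ω
  refine eq_empty_of_forall_notMem fun ω hω => ?_
  have hGF : G ω ≤ F ω := hF.2 hG ω
  simp only [G, ContinuousMap.add_apply, ContinuousMap.coe_mk] at hGF
  rw [indicator_of_mem (subset_closure hω : ω ∈ K)] at hGF
  linarith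

end

theorem wright_lemma_general {Ω : Type*} [TopologicalSpace Ω] [CompactSpace Ω] [T2Space Ω]
    [ExtremallyDisconnected Ω] {I : Type*} [Nonempty I] (f : I → C(Ω, ℝ))
    (F : C(Ω, ℝ)) (hglb : IsGLB (Set.range f) F) :
    {ω : Ω | F ω = ⨅ i, f i ω} ∈ residual Ω ∧ Dense {ω : Ω | F ω = ⨅ i, f i ω} := by
  have hle : ∀ i ω, F ω ≤ f i ω := fun i => hglb.1 ⟨i, rfl⟩
  have hmeagre : IsMeagre {ω : Ω | F ω = ⨅ i, f i ω}ᶜ := by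
    refine (isMeagre_iUnion fun n : ℕ => ?_).mono fun ω hω =>
      mem_iUnion.2 (exists_nat_forall_add_one_div_le (hle · ω) hω)
    exact (isNowhereDense_setOf_forall_add_le_of_isGLB hglb Nat.one_div_pos_of_nat).isMeagre
  have hres : {ω : Ω | F ω = ⨅ i, f i ω} ∈ residual Ω := compl_compl {ω : Ω | _} ▸ hmeagre
  exact ⟨hres, dense_of_mem_residual hres⟩

/-- **Wright's Lemma.** If `Ω` is compact Hausdorff and extremally
disconnected, `(f i)` a nonempty family in `C(Ω;ℝ)` bounded below, and `F` its greatest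
lower bound in `C(Ω;ℝ)`, then `F ω = ⨅ i, f i ω` on a residual (hence dense) subset. -/
theorem wright_lemma {Ω : Type*} [TopologicalSpace Ω] [CompactSpace Ω] [T2Space Ω]
    [ExtremallyDisconnected Ω] {I : Type*} [Nonempty I] (f : I → C(Ω, ℝ)) (g : C(Ω, ℝ))
    (hbd : ∀ i, g ≤ f i) (F : C(Ω, ℝ)) (hglb : IsGLB (Set.range f) F) :
    {ω : Ω | F ω = ⨅ i, f i ω} ∈ residual Ω ∧ Dense {ω : Ω | F ω = ⨅ i, f i ω} :=
  wright_lemma_general f F hglb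
end

section
/- Let Ω be a compact Hausdorff extremally disconnected space, let (e_α)_{α∈A} be a net in C(Ω;ℝ) and e ∈ C(Ω;ℝ). Suppose (e_α) order-converges to e, i.e., there is a net (f_i)_{i∈I} in C(Ω;ℝ) decreasing to 0 such that for every i ∈ I there is α_i ∈ A with |e_α − e| ≤ f_i for all α ≥ α_i. Then (e_α) is eventually bounded in the supremum norm, and there is a residual set D ⊆ Ω such that lim_α e_α(ω) = e(ω) for every ω ∈ D. -/
/-!
If `fᵢ` decreases to `0` in `C(Ω;ℝ)` and `c > 0`, the open set `{ω | ∃ i, fᵢ ω < c}` is dense: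
otherwise it misses a nonempty open `V`, and since `closure V` is clopen in an extremally
disconnected space, `c • 𝟙_{closure V}` is a continuous lower bound of all `fᵢ`, contradicting
`inf fᵢ = 0`. Intersecting over `c = 1/(n+1)` gives a residual set on which `infᵢ fᵢ ω = 0`,
and there the domination `|e_α − e| ≤ fᵢ` forces `e_α ω → e ω`.
-/

open Filter

/-- A net in `C(Ω;ℝ)` decreases to `0`: it is antitone, nonnegative, and `0` is the
greatest lower bound of its range. -/
def DecreasesToZero {Ω : Type*} [TopologicalSpace Ω] {I : Type*} [Preorder I]
    (f : I → C(Ω, ℝ)) : Prop :=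
  (∀ i j : I, i ≤ j → 0 ≤ f j ∧ f j ≤ f i) ∧ IsGLB (Set.range f) 0

/-- The net `e` order-converges to `e₀` in `C(Ω;ℝ)`: some net decreasing to `0`
eventually dominates `|e α − e₀|`. -/
def OrderTendsto {Ω A : Type*} [TopologicalSpace Ω] [Preorder A]
    (e : A → C(Ω, ℝ)) (e₀ : C(Ω, ℝ)) : Prop :=
  ∃ (I : Type) (pre : Preorder I),
    IsDirected I (fun i j => pre.le i j) ∧ Nonempty I ∧
    ∃ f : I → C(Ω, ℝ), @DecreasesToZero Ω _ I pre f ∧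
      ∀ i : I, ∃ a : A, ∀ b : A, a ≤ b → |e b - e₀| ≤ f i

open Topology

namespace ContinuousMap

variable {Ω : Type*} [TopologicalSpace Ω]

theorem norm_le_norm_of_abs_le [CompactSpace Ω] {g f : C(Ω, ℝ)} (h : |g| ≤ f) : ‖g‖ ≤ ‖f‖ :=
  (norm_le g (norm_nonneg f)).2 fun ω =>
    calc ‖g ω‖ = |g| ω := by rw [abs_apply, Real.norm_eq_abs]
      _ ≤ f ω := h ω
      _ ≤ ‖f‖ := (le_abs_self _).trans (f.norm_coe_le_norm ω)

variable [ExtremallyDisconnected Ω] {ι : Type*} {f : ι → C(Ω, ℝ)}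

theorem dense_setOf_exists_lt_of_isGLB_zero (hf : IsGLB (Set.range f) 0) {c : ℝ} (hc : 0 < c) :
    Dense {ω | ∃ i, f i ω < c} := by
  rw [dense_iff_inter_open]
  rintro V hV ⟨ω₀, hω₀⟩
  by_contra hdisj
  have hclopen : IsClopen (closure V) :=
    ⟨isClosed_closure, ExtremallyDisconnected.open_closure V hV⟩
  have hge : ∀ i, ∀ ω ∈ closure V, c ≤ f i ω := fun i =>
    closure_minimal (fun ω hω => not_lt.1 fun hlt => hdisj ⟨ω, hω, i, hlt⟩)
      (isClosed_le continuous_const (f i).continuous)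
  let g : C(Ω, ℝ) :=
    ⟨(closure V).indicator fun _ => c, hclopen.continuous_indicator continuous_const⟩
  have hg : g ∈ lowerBounds (Set.range f) := by
    rintro _ ⟨i, rfl⟩ ω
    by_cases hω : ω ∈ closure V
    · simpa [g, Set.indicator_of_mem hω] using hge i ω hω
    · simpa [g, Set.indicator_of_notMem hω] using hf.1 ⟨i, rfl⟩ ω
  have hgω₀ : g ω₀ ≤ 0 := hf.2 hg ω₀
  simp only [g, coe_mk, Set.indicator_of_mem (subset_closure hω₀)] at hgω₀
  linarith

theorem eventually_residual_forall_exists_lt (hf : IsGLB (Set.range f) 0) :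
    ∀ᶠ ω in residual Ω, ∀ ε > 0, ∃ i, f i ω < ε := by
  have hopen : ∀ c : ℝ, IsOpen {ω | ∃ i, f i ω < c} := fun c => by
    simpa only [Set.ofPred_exists] using
      isOpen_iUnion fun i => isOpen_lt (f i).continuous continuous_const
  have hres : ∀ᶠ ω in residual Ω, ∀ n : ℕ, ∃ i, f i ω < 1 / (n + 1) :=
    eventually_countable_forall.2 fun n =>
      residual_of_dense_open (hopen _) (dense_setOf_exists_lt_of_isGLB_zero hf (by positivity))
  filter_upwards [hres] with ω hω ε hε
  obtain ⟨n, hn⟩ := exists_nat_one_div_lt hε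
  obtain ⟨i, hi⟩ := hω n
  exact ⟨i, hi.trans hn⟩

end ContinuousMap

namespace OrderTendsto

variable {Ω A : Type*} [TopologicalSpace Ω] [Preorder A] {e : A → C(Ω, ℝ)} {e₀ : C(Ω, ℝ)}

theorem exists_eventually_norm_le [CompactSpace Ω] (h : OrderTendsto e e₀) :
    ∃ (C : ℝ) (a₀ : A), ∀ a : A, a₀ ≤ a → ‖e a‖ ≤ C := by
  obtain ⟨I, pre, -, ⟨i⟩, f, -, hdom⟩ := h
  obtain ⟨a₀, ha₀⟩ := hdom i
  refine ⟨‖e₀‖ + ‖f i‖, a₀, fun a ha => ?_⟩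
  calc ‖e a‖ ≤ ‖e₀‖ + ‖e a - e₀‖ := norm_le_norm_add_norm_sub' _ _
    _ ≤ ‖e₀‖ + ‖f i‖ := by gcongr; exact ContinuousMap.norm_le_norm_of_abs_le (ha₀ a ha)

theorem eventually_residual_tendsto_apply [ExtremallyDisconnected Ω] (h : OrderTendsto e e₀) :
    ∀ᶠ ω in residual Ω, Tendsto (fun a => e a ω) atTop (𝓝 (e₀ ω)) := by
  obtain ⟨I, pre, -, -, f, hf, hdom⟩ := h
  filter_upwards [ContinuousMap.eventually_residual_forall_exists_lt hf.2] with ω hω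
  rw [Metric.tendsto_nhds]
  intro ε hε
  obtain ⟨i, hi⟩ := hω ε hε
  obtain ⟨a, ha⟩ := hdom i
  filter_upwards [eventually_ge_atTop a] with b hb
  calc dist (e b ω) (e₀ ω) = |e b - e₀| ω := by
        rw [ContinuousMap.abs_apply, Real.dist_eq, ContinuousMap.sub_apply]
    _ ≤ f i ω := ha b hb ω
    _ < ε := hi

end OrderTendsto

theorem orderTendsto_imp_residual_pointwise_general {Ω : Type*} [TopologicalSpace Ω]
    [CompactSpace Ω] [ExtremallyDisconnected Ω]
    {A : Type*} [Preorder A]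
    (e : A → C(Ω, ℝ)) (e₀ : C(Ω, ℝ)) (h : OrderTendsto e e₀) :
    (∃ (C : ℝ) (a₀ : A), ∀ a : A, a₀ ≤ a → ‖e a‖ ≤ C) ∧
      ∃ D ∈ residual Ω, ∀ ω ∈ D,
        Tendsto (fun a => e a ω) atTop (nhds (e₀ ω)) :=
  ⟨h.exists_eventually_norm_le, h.eventually_residual_tendsto_apply.exists_mem⟩

/-- On a compact Hausdorff extremally disconnected space, an
order-convergent net in `C(Ω;ℝ)` is eventually norm-bounded and converges pointwise to
its order-limit on a residual set. -/
theorem orderTendsto_imp_residual_pointwise {Ω : Type*} [TopologicalSpace Ω]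
    [CompactSpace Ω] [T2Space Ω] [ExtremallyDisconnected Ω]
    {A : Type*} [Preorder A] [IsDirected A (· ≤ ·)] [Nonempty A]
    (e : A → C(Ω, ℝ)) (e₀ : C(Ω, ℝ)) (h : OrderTendsto e e₀) :
    (∃ (C : ℝ) (a₀ : A), ∀ a : A, a₀ ≤ a → ‖e a‖ ≤ C) ∧
      ∃ D ∈ residual Ω, ∀ ω ∈ D,
        Tendsto (fun a => e a ω) atTop (nhds (e₀ ω)) :=
  orderTendsto_imp_residual_pointwise_general e e₀ h
end

section
/- Let A be a commutative unital C*-algebra, let E and F be Hilbert modules over A, and let T : E → F be a bounded A-linear map with operator norm ‖T‖. Then ⟪Tx, Tx⟫ ≤ ‖T‖² ⟪x, x⟫ in the order of A for every x ∈ E; equivalently, √⟪Tx,Tx⟫ ≤ ‖T‖ · √⟪x,x⟫ for every x ∈ E. -/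
/-! Write `a = ⟪x,x⟫` and `b = ⟪Tx,Tx⟫`. Applying the norm bound to `c • x` gives
`‖c⋆c b‖ ≤ ‖T‖² ‖c⋆c a‖` for every `c ∈ A`, and in a commutative C*-algebra this family of norm
inequalities already forces `b ≤ ‖T‖² a`: test it against `c⋆c = (a + ε)⁻¹` and let `ε → 0`. -/

noncomputable section

/-- A Hilbert module structure over a commutative unital C*-algebra `A` on the unital
`A`-module `E`: an `A`-valued inner product, `A`-linear in the first variable, conjugate
symmetric and positive definite, such that `E` is complete for the induced norm
`x ↦ √‖⟪x,x⟫‖`. -/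
structure HilbertModuleStruct (A : Type*) [CommCStarAlgebra A] [PartialOrder A]
    [StarOrderedRing A] (E : Type*) [AddCommGroup E] [Module A E] where
  inner : E → E → A
  add_left : ∀ x y z : E, inner (x + y) z = inner x z + inner y z
  smul_left : ∀ (a : A) (x y : E), inner (a • x) y = a * inner x y
  star_inner : ∀ x y : E, star (inner x y) = inner y x
  inner_self_nonneg : ∀ x : E, 0 ≤ inner x x
  inner_self_eq_zero : ∀ x : E, inner x x = 0 → x = 0
  complete : ∀ u : ℕ → E,
    (∀ ε : ℝ, 0 < ε → ∃ N : ℕ, ∀ m n : ℕ, N ≤ m → N ≤ n →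
      ‖inner (u m - u n) (u m - u n)‖ < ε) →
    ∃ x : E, ∀ ε : ℝ, 0 < ε → ∃ N : ℕ, ∀ n : ℕ, N ≤ n → ‖inner (u n - x) (u n - x)‖ < ε

/-- The norm on a Hilbert module induced by the `A`-valued inner product. -/
def HilbertModuleStruct.nrm {A : Type*} [CommCStarAlgebra A] [PartialOrder A]
    [StarOrderedRing A] {E : Type*} [AddCommGroup E] [Module A E]
    (hE : HilbertModuleStruct A E) (x : E) : ℝ :=
  Real.sqrt ‖hE.inner x x‖

/-- The operator norm of a bounded `A`-linear map between Hilbert modules. -/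
def opNorm {A : Type*} [CommCStarAlgebra A] [PartialOrder A] [StarOrderedRing A]
    {E F : Type*} [AddCommGroup E] [Module A E] [AddCommGroup F] [Module A F]
    (hE : HilbertModuleStruct A E) (hF : HilbertModuleStruct A F) (T : E →ₗ[A] F) : ℝ :=
  sInf {C : ℝ | 0 ≤ C ∧ ∀ x : E, hF.nrm (T x) ≤ C * hE.nrm x}

open Filter Topology

section CommCStarAlgebra

variable {A : Type*} [CommCStarAlgebra A] [PartialOrder A] [StarOrderedRing A]

/-- Take `c = √w` with `w = (a + ε)⁻¹`: since `‖w a‖ ≤ 1`, we get `w b ≤ K`, and multiplying by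
`a + ε` gives the claim. -/
theorem le_smul_add_algebraMap_of_forall_norm_star_mul_self_mul_le {a b : A} {K ε : ℝ}
    (ha : 0 ≤ a) (hb : 0 ≤ b) (hK : 0 ≤ K) (hε : 0 < ε)
    (h : ∀ c : A, ‖star c * c * b‖ ≤ K * ‖star c * c * a‖) :
    b ≤ K • (a + algebraMap ℝ A ε) := by
  have hspec : ∀ s ∈ spectrum ℝ a, 0 < s + ε := fun s hs => by
    have := spectrum_nonneg_of_nonneg ha hs
    positivity
  have hcont : ContinuousOn (fun s : ℝ => (s + ε)⁻¹) (spectrum ℝ a) :=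
    (continuousOn_id.add continuousOn_const).inv₀ fun s hs => (hspec s hs).ne'
  set w := cfc (fun s : ℝ => (s + ε)⁻¹) a
  have hw : 0 ≤ w := cfc_nonneg fun s hs => (inv_pos.2 (hspec s hs)).le
  have hu : a + algebraMap ℝ A ε = cfc (fun s : ℝ => s + ε) a := by
    rw [cfc_add a (fun s => s) (fun _ => ε), cfc_id' ℝ a, cfc_const ε a]
  have hwu : w * (a + algebraMap ℝ A ε) = 1 := by
    rw [hu, ← cfc_mul _ _ a hcont, ← cfc_const_one ℝ a]
    exact cfc_congr fun s hs => inv_mul_cancel₀ (hspec s hs).ne'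
  have hwa : ‖w * a‖ ≤ 1 := by
    have hwa_eq : w * a = cfc (fun s : ℝ => (s + ε)⁻¹ * s) a := by
      rw [cfc_mul _ _ a hcont, cfc_id' ℝ a]
    rw [hwa_eq]
    refine norm_cfc_le zero_le_one fun s hs => ?_
    have := spectrum_nonneg_of_nonneg ha hs
    rw [Real.norm_of_nonneg (by positivity), inv_mul_le_one₀ (hspec s hs)]
    linarith
  have hwb : w * b ≤ algebraMap ℝ A K := by
    rw [← CStarAlgebra.norm_le_iff_le_algebraMap _ hK ((Commute.all w b).mul_nonneg hw hb)]
    have hc := h (CFC.sqrt w)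
    rw [(CFC.sqrt_nonneg w).isSelfAdjoint.star_eq, CFC.sqrt_mul_sqrt_self w hw] at hc
    calc ‖w * b‖ ≤ K * ‖w * a‖ := hc
      _ ≤ K := mul_le_of_le_one_right hK hwa
  calc b = (a + algebraMap ℝ A ε) * (w * b) := by rw [← mul_assoc, mul_comm _ w, hwu, one_mul]
    _ ≤ (a + algebraMap ℝ A ε) * algebraMap ℝ A K := by
      rw [← sub_nonneg, ← mul_sub]
      exact (Commute.all _ _).mul_nonneg (add_nonneg ha (algebraMap_nonneg A hε.le))
        (sub_nonneg.2 hwb)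
    _ = K • (a + algebraMap ℝ A ε) := by rw [Algebra.smul_def, mul_comm]

theorem le_smul_of_forall_norm_star_mul_self_mul_le {a b : A} {K : ℝ}
    (ha : 0 ≤ a) (hb : 0 ≤ b) (hK : 0 ≤ K)
    (h : ∀ c : A, ‖star c * c * b‖ ≤ K * ‖star c * c * a‖) : b ≤ K • a := by
  have hlim : Tendsto (fun ε : ℝ => K • (a + algebraMap ℝ A ε)) (𝓝[>] 0) (𝓝 (K • a)) := by
    have hcont : Continuous fun ε : ℝ => K • (a + algebraMap ℝ A ε) := by fun_prop
    exact (hcont.tendsto' 0 _ (by simp)).mono_left nhdsWithin_le_nhds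
  exact ge_of_tendsto hlim <| eventually_nhdsWithin_of_forall fun ε hε =>
    le_smul_add_algebraMap_of_forall_norm_star_mul_self_mul_le ha hb hK hε h

end CommCStarAlgebra

namespace HilbertModuleStruct

variable {A : Type*} [CommCStarAlgebra A] [PartialOrder A] [StarOrderedRing A]
  {E F : Type*} [AddCommGroup E] [Module A E] [AddCommGroup F] [Module A F]
  (hE : HilbertModuleStruct A E) (hF : HilbertModuleStruct A F)

theorem inner_smul_smul_self (c : A) (x : E) :
    hE.inner (c • x) (c • x) = star c * c * hE.inner x x := by
  rw [hE.smul_left, ← hE.star_inner, hE.smul_left, star_mul, hE.star_inner]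
  ring

theorem nrm_nonneg (x : E) : 0 ≤ hE.nrm x :=
  Real.sqrt_nonneg _

theorem nrm_map_le_opNorm_mul {T : E →ₗ[A] F}
    (hT : ∃ C : ℝ, 0 ≤ C ∧ ∀ x : E, hF.nrm (T x) ≤ C * hE.nrm x) (x : E) :
    hF.nrm (T x) ≤ opNorm hE hF T * hE.nrm x := by
  rw [opNorm, mul_comm, ← smul_eq_mul, ← Real.sInf_smul_of_nonneg (hE.nrm_nonneg x)]
  refine le_csInf (Set.Nonempty.smul_set hT) ?_
  rintro _ ⟨C, hC, rfl⟩
  exact (hC.2 x).trans_eq (mul_comm _ _)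

theorem norm_inner_map_self_le_opNorm_sq_mul {T : E →ₗ[A] F}
    (hT : ∃ C : ℝ, 0 ≤ C ∧ ∀ x : E, hF.nrm (T x) ≤ C * hE.nrm x) (x : E) :
    ‖hF.inner (T x) (T x)‖ ≤ opNorm hE hF T ^ 2 * ‖hE.inner x x‖ := by
  have h := pow_le_pow_left₀ (hF.nrm_nonneg _) (nrm_map_le_opNorm_mul hE hF hT x) 2
  simpa only [nrm, mul_pow, norm_nonneg, Real.sq_sqrt] using h

end HilbertModuleStruct

/-- For a bounded `A`-linear map `T` between Hilbert modules over a
commutative unital C*-algebra, `⟪Tx,Tx⟫ ≤ ‖T‖² ⟪x,x⟫` in the order of `A`. -/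
theorem inner_map_le_opNorm_sq_smul_inner {A : Type*} [CommCStarAlgebra A] [PartialOrder A]
    [StarOrderedRing A] {E F : Type*} [AddCommGroup E] [Module A E] [AddCommGroup F]
    [Module A F] (hE : HilbertModuleStruct A E) (hF : HilbertModuleStruct A F)
    (T : E →ₗ[A] F) (hT : ∃ C : ℝ, 0 ≤ C ∧ ∀ x : E, hF.nrm (T x) ≤ C * hE.nrm x) :
    ∀ x : E, hF.inner (T x) (T x) ≤ (opNorm hE hF T) ^ 2 • hE.inner x x := by
  intro x
  refine le_smul_of_forall_norm_star_mul_self_mul_le (hE.inner_self_nonneg x)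
    (hF.inner_self_nonneg (T x)) (sq_nonneg _) fun c => ?_
  have h := hE.norm_inner_map_self_le_opNorm_sq_mul hF hT (c • x)
  rwa [map_smul, hE.inner_smul_smul_self, hF.inner_smul_smul_self] at h

end
end

section
/- Let A be a commutative unital C*-algebra, let E and F be Hilbert modules over A, let T : E → F be a bounded A-linear map, and suppose b ∈ A is the least upper bound in A of the set {√⟪Tx,Tx⟫ : x ∈ E, ⟪x,x⟫ ≤ 1}. Then ‖b‖_A = ‖T‖, the operator norm of T. -/
/-!
For positive `a ∈ A` and `r ≥ 0` one has `‖a‖ ≤ r ↔ a ≤ r • 1`, and `‖√a‖ = √‖a‖`. Hence a real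
`C ≥ 0` bounds `T` on the unit ball exactly when `C • 1` is an upper bound of
`{√⟪Tx,Tx⟫ : ⟪x,x⟫ ≤ 1}`, and `‖b‖` is the least such `C`; homogeneity of `x ↦ √‖⟪x,x⟫‖` under
real scalars passes from the unit ball to all of `E`.
-/

noncomputable section

namespace HilbertModuleStruct

variable {A : Type*} [CommCStarAlgebra A] [PartialOrder A] [StarOrderedRing A]
  {E : Type*} [AddCommGroup E] [Module A E] (hE : HilbertModuleStruct A E)

lemma inner_zero_left (y : E) : hE.inner 0 y = 0 := by
  simpa using hE.add_left 0 0 y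

lemma nrm_zero : hE.nrm 0 = 0 := by
  simp [nrm, inner_zero_left]

lemma nrm_pos {x : E} (hx : x ≠ 0) : 0 < hE.nrm x :=
  Real.sqrt_pos.2 <| norm_pos_iff.2 fun h => hx (hE.inner_self_eq_zero x h)

lemma inner_smul_smul (a : A) (x : E) :
    hE.inner (a • x) (a • x) = a * star a * hE.inner x x := by
  rw [hE.smul_left, ← hE.star_inner, hE.smul_left, star_mul, hE.star_inner]
  ring

lemma nrm_algebraMap_smul (r : ℝ) (x : E) :
    hE.nrm (algebraMap ℝ A r • x) = |r| * hE.nrm x := by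
  have hstar : star (algebraMap ℝ A r) = algebraMap ℝ A r := by
    rw [← algebraMap_star_comm, star_trivial]
  rw [nrm, nrm, inner_smul_smul, hstar, ← map_mul, ← Algebra.smul_def, norm_smul,
    Real.sqrt_mul (norm_nonneg _), Real.norm_eq_abs, abs_mul_self, Real.sqrt_mul_self_eq_abs]

lemma nrm_eq_norm_sqrt_inner (x : E) : hE.nrm x = ‖CFC.sqrt (hE.inner x x)‖ :=
  (CFC.norm_sqrt _ (hE.inner_self_nonneg x)).symm

lemma sqrt_inner_self_le_algebraMap_iff {r : ℝ} (hr : 0 ≤ r) (x : E) :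
    CFC.sqrt (hE.inner x x) ≤ algebraMap ℝ A r ↔ hE.nrm x ≤ r := by
  rw [nrm_eq_norm_sqrt_inner, CStarAlgebra.norm_le_iff_le_algebraMap _ hr (CFC.sqrt_nonneg _)]

lemma inner_self_le_one_iff (x : E) : hE.inner x x ≤ 1 ↔ hE.nrm x ≤ 1 := by
  rw [← CStarAlgebra.norm_le_one_iff_of_nonneg _ (hE.inner_self_nonneg x), nrm, Real.sqrt_le_one]

end HilbertModuleStruct

section BoundedMap

variable {A : Type*} [CommCStarAlgebra A] [PartialOrder A] [StarOrderedRing A]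
  {E F : Type*} [AddCommGroup E] [Module A E] [AddCommGroup F] [Module A F]
  (hE : HilbertModuleStruct A E) (hF : HilbertModuleStruct A F) (T : E →ₗ[A] F)

lemma nrm_map_le_mul_of_forall_nrm_le_one {c : ℝ}
    (h : ∀ x, hE.nrm x ≤ 1 → hF.nrm (T x) ≤ c) (x : E) :
    hF.nrm (T x) ≤ c * hE.nrm x := by
  rcases eq_or_ne x 0 with rfl | hx
  · simp [hE.nrm_zero, hF.nrm_zero]
  have hpos := hE.nrm_pos hx
  have hunit : hE.nrm (algebraMap ℝ A (hE.nrm x)⁻¹ • x) = 1 := by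
    rw [hE.nrm_algebraMap_smul, abs_of_pos (inv_pos.2 hpos), inv_mul_cancel₀ hpos.ne']
  have hTunit := h _ hunit.le
  rwa [map_smul, hF.nrm_algebraMap_smul, abs_of_pos (inv_pos.2 hpos), inv_mul_le_iff₀ hpos,
    mul_comm] at hTunit

def sqrtInnerImageUnitBall : Set A :=
  {a | ∃ x : E, hE.inner x x ≤ 1 ∧ a = CFC.sqrt (hF.inner (T x) (T x))}

variable {hE hF T} {b : A}

lemma nrm_map_le_norm_mul_of_mem_upperBounds
    (hb : b ∈ upperBounds (sqrtInnerImageUnitBall hE hF T)) (x : E) :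
    hF.nrm (T x) ≤ ‖b‖ * hE.nrm x := by
  refine nrm_map_le_mul_of_forall_nrm_le_one hE hF T (fun y hy => ?_) x
  have hle : CFC.sqrt (hF.inner (T y) (T y)) ≤ b := hb ⟨y, (hE.inner_self_le_one_iff y).2 hy, rfl⟩
  rw [hF.nrm_eq_norm_sqrt_inner]
  exact CStarAlgebra.norm_le_norm_of_nonneg_of_le (CFC.sqrt_nonneg _) hle

lemma norm_le_of_isLUB (hb : IsLUB (sqrtInnerImageUnitBall hE hF T) b) {C : ℝ} (hC : 0 ≤ C)
    (hT : ∀ x, hF.nrm (T x) ≤ C * hE.nrm x) : ‖b‖ ≤ C := by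
  have hb_nonneg : 0 ≤ b := hb.1 ⟨0, by simp [hE.inner_zero_left], by simp [hF.inner_zero_left]⟩
  rw [CStarAlgebra.norm_le_iff_le_algebraMap b hC hb_nonneg]
  refine hb.2 ?_
  rintro _ ⟨x, hx, rfl⟩
  rw [hF.sqrt_inner_self_le_algebraMap_iff hC]
  calc hF.nrm (T x) ≤ C * hE.nrm x := hT x
    _ ≤ C * 1 := mul_le_mul_of_nonneg_left ((hE.inner_self_le_one_iff x).1 hx) hC
    _ = C := mul_one C

end BoundedMap

theorem norm_lub_eq_opNorm_general {A : Type*} [CommCStarAlgebra A] [PartialOrder A]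
    [StarOrderedRing A] {E F : Type*} [AddCommGroup E] [Module A E] [AddCommGroup F]
    [Module A F] (hE : HilbertModuleStruct A E) (hF : HilbertModuleStruct A F)
    (T : E →ₗ[A] F)
    (b : A)
    (hb : IsLUB {a : A | ∃ x : E, hE.inner x x ≤ 1 ∧
      a = CFC.sqrt (hF.inner (T x) (T x))} b) :
    ‖b‖ = opNorm hE hF T := by
  have hleast : IsLeast {C : ℝ | 0 ≤ C ∧ ∀ x : E, hF.nrm (T x) ≤ C * hE.nrm x} ‖b‖ :=
    ⟨⟨norm_nonneg b, nrm_map_le_norm_mul_of_mem_upperBounds hb.1⟩,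
      fun C hC => norm_le_of_isLUB hb hC.1 hC.2⟩
  exact hleast.csInf_eq.symm

/-- If `b` is the least upper bound in `A` of
`{√⟪Tx,Tx⟫ : ⟪x,x⟫ ≤ 1}` for a bounded `A`-linear map `T` between Hilbert modules, then
`‖b‖ = ‖T‖`, the operator norm of `T`. -/
theorem norm_lub_eq_opNorm {A : Type*} [CommCStarAlgebra A] [PartialOrder A]
    [StarOrderedRing A] {E F : Type*} [AddCommGroup E] [Module A E] [AddCommGroup F]
    [Module A F] (hE : HilbertModuleStruct A E) (hF : HilbertModuleStruct A F)
    (T : E →ₗ[A] F) (hT : ∃ C : ℝ, 0 ≤ C ∧ ∀ x : E, hF.nrm (T x) ≤ C * hE.nrm x)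
    (b : A)
    (hb : IsLUB {a : A | ∃ x : E, hE.inner x x ≤ 1 ∧
      a = CFC.sqrt (hF.inner (T x) (T x))} b) :
    ‖b‖ = opNorm hE hF T :=
  norm_lub_eq_opNorm_general hE hF T b hb

end
end

section
/- (Bessel inequality for suborthonormal systems) Let A be a commutative unital C*-algebra, let E be a Hilbert module over A, and let y₁, …, y_n ∈ E be a suborthonormal system, i.e., ⟪y_i, y_j⟫ = 0 for i ≠ j and each ⟪y_j, y_j⟫ is an idempotent of A. Then for every x ∈ E one has Σ_{j=1}^n ⟪x,y_j⟫·⟪x,y_j⟫* ≤ ⟪x,x⟫ in the order of A. -/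
/-!
With `aⱼ = ⟪x,yⱼ⟫` and `s = ∑ⱼ aⱼ • yⱼ`, expanding `0 ≤ ⟪x - s, x - s⟫` gives
`⟪x,x⟫ - 2 ∑ⱼ aⱼ aⱼ* + ∑ⱼ aⱼ aⱼ* ⟪yⱼ,yⱼ⟫` by orthogonality. The idempotent `⟪yⱼ,yⱼ⟫` acts as
the identity on `yⱼ` (the norm of `yⱼ - ⟪yⱼ,yⱼ⟫ • yⱼ` vanishes), hence also on `aⱼ`, and the
last sum is `∑ⱼ aⱼ aⱼ*`.
-/

noncomputable section

namespace HilbertModuleStruct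

variable {A : Type*} [CommCStarAlgebra A] [PartialOrder A] [StarOrderedRing A]
  {E : Type*} [AddCommGroup E] [Module A E] (hE : HilbertModuleStruct A E)

def innerLeftHom (z : E) : E →+ A :=
  AddMonoidHom.mk' (fun x => hE.inner x z) (fun x y => hE.add_left x y z)

lemma inner_sub_left (x y z : E) :
    hE.inner (x - y) z = hE.inner x z - hE.inner y z :=
  map_sub (hE.innerLeftHom z) x y

lemma inner_sum_left {ι : Type*} (s : Finset ι) (f : ι → E) (z : E) :
    hE.inner (∑ i ∈ s, f i) z = ∑ i ∈ s, hE.inner (f i) z :=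
  map_sum (hE.innerLeftHom z) f s

lemma inner_sub_right (x y z : E) :
    hE.inner x (y - z) = hE.inner x y - hE.inner x z := by
  rw [← hE.star_inner, inner_sub_left, star_sub, hE.star_inner, hE.star_inner]

lemma inner_smul_right (a : A) (x y : E) :
    hE.inner x (a • y) = star a * hE.inner x y := by
  rw [← hE.star_inner, smul_left, star_mul, hE.star_inner, mul_comm]

lemma inner_sum_right {ι : Type*} (s : Finset ι) (f : ι → E) (z : E) :
    hE.inner z (∑ i ∈ s, f i) = ∑ i ∈ s, hE.inner z (f i) := by
  rw [← hE.star_inner, inner_sum_left, star_sum]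
  simp only [hE.star_inner]

lemma isSelfAdjoint_inner_self (y : E) : IsSelfAdjoint (hE.inner y y) :=
  IsSelfAdjoint.of_nonneg (hE.inner_self_nonneg y)

lemma inner_self_smul_of_isIdempotentElem {y : E} (hy : IsIdempotentElem (hE.inner y y)) :
    hE.inner y y • y = y := by
  have hp : star (hE.inner y y) = hE.inner y y := hE.isSelfAdjoint_inner_self y
  refine (sub_eq_zero.mp (hE.inner_self_eq_zero _ ?_)).symm
  rw [inner_sub_left, inner_sub_right, inner_sub_right, smul_left, smul_left, inner_smul_right]
  simp only [hp, hy.eq, sub_self]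

lemma inner_mul_inner_self_of_isIdempotentElem {y : E} (hy : IsIdempotentElem (hE.inner y y))
    (x : E) : hE.inner x y * hE.inner y y = hE.inner x y := by
  conv_rhs => rw [← hE.inner_self_smul_of_isIdempotentElem hy]
  rw [inner_smul_right, hE.isSelfAdjoint_inner_self y, mul_comm]

lemma inner_sum_smul_sum_smul_of_pairwise {ι : Type*} (s : Finset ι) {y : ι → E}
    (horth : Pairwise fun i j => hE.inner (y i) (y j) = 0) (c d : ι → A) :
    hE.inner (∑ i ∈ s, c i • y i) (∑ j ∈ s, d j • y j)
      = ∑ i ∈ s, c i * star (d i) * hE.inner (y i) (y i) := by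
  rw [inner_sum_left]
  refine Finset.sum_congr rfl fun i hi => ?_
  rw [smul_left, inner_sum_right, Finset.sum_eq_single_of_mem i hi, inner_smul_right, mul_assoc]
  intro j _ hji
  rw [inner_smul_right, horth hji.symm, mul_zero]

end HilbertModuleStruct

/-- **Bessel inequality.** For a suborthonormal system `y₁, …, yₙ` in a
Hilbert module over a commutative unital C*-algebra (pairwise orthogonal, each
`⟪yⱼ,yⱼ⟫` idempotent), one has `∑ⱼ ⟪x,yⱼ⟫ ⟪x,yⱼ⟫* ≤ ⟪x,x⟫`. -/
theorem bessel_suborthonormal {A : Type*} [CommCStarAlgebra A] [PartialOrder A]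
    [StarOrderedRing A] {E : Type*} [AddCommGroup E] [Module A E]
    (hE : HilbertModuleStruct A E) {n : ℕ} (y : Fin n → E)
    (horth : ∀ i j, i ≠ j → hE.inner (y i) (y j) = 0)
    (hidem : ∀ j, IsIdempotentElem (hE.inner (y j) (y j))) :
    ∀ x : E, ∑ j, hE.inner x (y j) * star (hE.inner x (y j)) ≤ hE.inner x x := by
  intro x
  set a : Fin n → A := fun j => hE.inner x (y j)
  set s : E := ∑ j, a j • y j
  have hxs : hE.inner x s = ∑ j, a j * star (a j) := by
    simp only [s, hE.inner_sum_right, hE.inner_smul_right, a, mul_comm]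
  have hsx : hE.inner s x = ∑ j, a j * star (a j) := by
    rw [← hE.star_inner, hxs, star_sum]
    simp only [star_mul, star_star]
  have hss : hE.inner s s = ∑ j, a j * star (a j) := by
    rw [hE.inner_sum_smul_sum_smul_of_pairwise _ horth]
    refine Finset.sum_congr rfl fun j _ => ?_
    rw [mul_right_comm, hE.inner_mul_inner_self_of_isIdempotentElem (hidem j)]
  have hpos := hE.inner_self_nonneg (x - s)
  rwa [hE.inner_sub_left, hE.inner_sub_right, hE.inner_sub_right, hxs, hsx, hss, sub_self,
    sub_zero, sub_nonneg] at hpos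

end
end

section
/- Let 𝕋 = ℝ/ℤ carry its Haar probability measure and let 𝕋² carry the product (Haar) probability measure. For α ∈ 𝕋 define φ : 𝕋² → 𝕋² by φ(y,z) = (y + α, z + y) (the skew torus map). Then φ preserves the measure on 𝕋², and for every f ∈ L²(𝕋²;ℂ) with f ∘ φ = f almost everywhere there exists g ∈ L²(𝕋;ℂ) with g(· + α) = g almost everywhere such that f(y,z) = g(y) for almost every (y,z) ∈ 𝕋². In other words, the extension of the rotation system (𝕋, y ↦ y+α) given by the first-coordinate projection from the skew torus is an ergodic extension. -/
/-!
Write `b n y` for the `n`-th Fourier coefficient of the fibre `z ↦ f (y, z)`. Invariance under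
`(y, z) ↦ (y + α, z + y)` gives `b n y = fourier n y · b n (y + α)`, so the Fourier coefficients
of `b n ∈ L²(𝕋)` satisfy `|(b n)^(m + n)| = |(b n)^(m)|`. For `n ≠ 0` a square-summable sequence
whose modulus has a nonzero period vanishes, hence `b n = 0`. Thus almost every fibre of `f` is
the constant `b 0 y`, and `b 0` is invariant under the rotation by `α`.
-/

open MeasureTheory Filter Topology

theorem Function.Periodic.eq_zero_of_summable {G : Type*} [AddCommGroup G] [TopologicalSpace G]
    [IsTopologicalAddGroup G] [T2Space G] {u : ℤ → G} {c : ℤ} (hu : Function.Periodic u c)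
    (hc : c ≠ 0) (hs : Summable u) : u = 0 := by
  funext m
  have hinj : Function.Injective fun k : ℕ => m + k * c := fun k l hkl => by
    simpa [hc] using hkl
  have hlim : Tendsto (fun k : ℕ => u (m + k * c)) atTop (𝓝 0) := by
    rw [← Nat.cofinite_eq_atTop]
    exact hs.tendsto_cofinite_zero.comp hinj.tendsto_cofinite
  rw [funext fun k : ℕ => hu.nat_mul k m] at hlim
  exact tendsto_const_nhds_iff.mp hlim

theorem MeasureTheory.MemLp.two_prod_right_ae {α β E : Type*} [MeasurableSpace α]
    [MeasurableSpace β] [NormedAddCommGroup E] {μ : Measure α} {ν : Measure β} [SFinite μ]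
    [SFinite ν] {f : α × β → E} (hf : MemLp f 2 (μ.prod ν)) :
    ∀ᵐ x ∂μ, MemLp (fun y => f (x, y)) 2 ν := by
  have hsq := (memLp_two_iff_integrable_sq_norm hf.1).mp hf
  filter_upwards [hsq.prod_right_ae, hf.1.prodMk_left] with x hx hmeas
  exact (memLp_two_iff_integrable_sq_norm hmeas).mpr hx

theorem MeasureTheory.measurePreserving_skewAddRight {G : Type*} [MeasurableSpace G] [AddGroup G]
    [MeasurableAdd₂ G] (μ : Measure G) [SFinite μ] [μ.IsAddRightInvariant] (α : G) :
    MeasurePreserving (fun p : G × G => (p.1 + α, p.2 + p.1)) (μ.prod μ) (μ.prod μ) :=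
  (measurePreserving_add_right μ α).skew_product (by fun_prop)
    (Eventually.of_forall fun y => (measurePreserving_add_right μ y).map_eq)

theorem AddCircle.fourier_apply_add {T : ℝ} (n : ℤ) (x y : AddCircle T) :
    fourier n (x + y) = fourier n x * fourier n y := by
  simp only [fourier_apply, smul_add, toCircle_add, Circle.coe_mul]

namespace AddCircle

variable {T : ℝ} [Fact (0 < T)] {E : Type*} [NormedAddCommGroup E] [NormedSpace ℂ E]

theorem fourierCoeff_comp_add_right (f : AddCircle T → E) (a : AddCircle T) (n : ℤ) :
    fourierCoeff (fun x => f (x + a)) n = fourier n a • fourierCoeff f n := by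
  have htrans : ∀ x, fourier (-n) x • f (x + a)
      = fourier n a • (fourier (-n) (x + a) • f (x + a)) := fun x => by
    rw [smul_smul, fourier_apply_add, mul_left_comm, ← fourier_add, add_neg_cancel, fourier_zero,
      mul_one]
  simp only [fourierCoeff, htrans, integral_smul]
  congr 1
  exact integral_add_right_eq_self (fun x => fourier (-n) x • f x) a

theorem fourierCoeff_fourier_smul (f : AddCircle T → E) (k n : ℤ) :
    fourierCoeff (fun x => fourier k x • f x) n = fourierCoeff f (n - k) := by
  simp only [fourierCoeff, smul_smul, ← fourier_add, show -(n - k) = -n + k by ring]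

theorem fourierCoeff_const [CompleteSpace E] (c : E) :
    fourierCoeff (fun _ : AddCircle T => c) = Pi.single 0 c := by
  ext n
  have h := congrFun (fourierCoeff_fourier (T := T) 0) n
  simp only [fourierCoeff, fourier_zero, smul_eq_mul, mul_one] at h
  rw [fourierCoeff, integral_smul_const, h]
  by_cases hn : n = 0 <;> simp [hn]

theorem hasSum_sq_fourierCoeff_of_memLp {f : AddCircle T → ℂ} (hf : MemLp f 2 haarAddCircle) :
    HasSum (fun n => ‖fourierCoeff f n‖ ^ 2) (∫ t, ‖f t‖ ^ 2 ∂haarAddCircle) := by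
  have hcoeff : fourierCoeff (hf.toLp f : AddCircle T → ℂ) = fourierCoeff f :=
    fourierCoeff_congr_ae hf.coeFn_toLp
  have hnorm : ∫ t, ‖(hf.toLp f : AddCircle T → ℂ) t‖ ^ 2 ∂haarAddCircle
      = ∫ t, ‖f t‖ ^ 2 ∂haarAddCircle :=
    integral_congr_ae (hf.coeFn_toLp.mono fun t ht => by simp only [ht])
  simpa only [hcoeff, hnorm] using hasSum_sq_fourierCoeff (hf.toLp f)

theorem sq_norm_fourierCoeff_le {f : AddCircle T → ℂ} (hf : MemLp f 2 haarAddCircle) (n : ℤ) :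
    ‖fourierCoeff f n‖ ^ 2 ≤ ∫ t, ‖f t‖ ^ 2 ∂haarAddCircle :=
  le_hasSum (hasSum_sq_fourierCoeff_of_memLp hf) n fun _ _ => by positivity

theorem ae_eq_zero_of_fourierCoeff_eq_zero {f : AddCircle T → ℂ} (hf : MemLp f 2 haarAddCircle)
    (h : fourierCoeff f = 0) : f =ᵐ[haarAddCircle] 0 := by
  have hnorm : ∫ t, ‖f t‖ ^ 2 ∂haarAddCircle = 0 := by
    have hsum := hasSum_sq_fourierCoeff_of_memLp hf
    simp only [h, Pi.zero_apply, norm_zero, zero_pow (M₀ := ℝ) two_ne_zero] at hsum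
    exact hsum.unique hasSum_zero
  filter_upwards [(integral_eq_zero_iff_of_nonneg (fun _ => by positivity)
    (hf.integrable_norm_pow two_ne_zero)).mp hnorm] with t ht
  simpa using ht

theorem ae_eq_const_of_fourierCoeff_eq_zero {f : AddCircle T → ℂ} (hf : MemLp f 2 haarAddCircle)
    (h : ∀ n ≠ 0, fourierCoeff f n = 0) : f =ᵐ[haarAddCircle] fun _ => fourierCoeff f 0 := by
  have hsub := hf.add (memLp_const (-fourierCoeff f 0))
  have hcoeff : fourierCoeff (f + fun _ => -fourierCoeff f 0) = 0 := by
    rw [fourierCoeff.add (hf.integrable one_le_two) (integrable_const _), fourierCoeff_const]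
    ext n
    by_cases hn : n = 0
    · simp [hn]
    · simp [hn, h n hn]
  filter_upwards [ae_eq_zero_of_fourierCoeff_eq_zero hsub hcoeff] with t ht
  exact add_neg_eq_zero.mp ht

theorem ae_eq_zero_of_ae_eq_fourier_mul_comp_add_right {f : AddCircle T → ℂ}
    (hf : MemLp f 2 haarAddCircle) {n : ℤ} (hn : n ≠ 0) (a : AddCircle T)
    (h : f =ᵐ[haarAddCircle] fun x => fourier n x * f (x + a)) : f =ᵐ[haarAddCircle] 0 := by
  have hshift : ∀ m, fourierCoeff f (m + n) = fourier m a * fourierCoeff f m := fun m => by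
    calc fourierCoeff f (m + n)
        _ = fourierCoeff (fun x => fourier n x • f (x + a)) (m + n) := by
          rw [fourierCoeff_congr_ae h]; rfl
        _ = fourierCoeff (fun x => f (x + a)) m := by
          rw [fourierCoeff_fourier_smul, add_sub_cancel_right]
        _ = fourier m a * fourierCoeff f m := fourierCoeff_comp_add_right f a m
  have hper : Function.Periodic (fun m => ‖fourierCoeff f m‖ ^ 2) n := fun m => by
    simp only [hshift, norm_mul, fourier_apply, Circle.norm_coe, one_mul]
  have hzero := hper.eq_zero_of_summable hn (hasSum_sq_fourierCoeff_of_memLp hf).summable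
  refine ae_eq_zero_of_fourierCoeff_eq_zero hf (funext fun m => ?_)
  simpa using congrFun hzero m

noncomputable def fiberFourierCoeff (f : AddCircle T × AddCircle T → ℂ) (n : ℤ)
    (y : AddCircle T) : ℂ :=
  fourierCoeff (fun z => f (y, z)) n

theorem aestronglyMeasurable_fiberFourierCoeff {f : AddCircle T × AddCircle T → ℂ}
    {μ : Measure (AddCircle T)} [SFinite μ]
    (hf : AEStronglyMeasurable f (μ.prod haarAddCircle)) (n : ℤ) :
    AEStronglyMeasurable (fiberFourierCoeff f n) μ :=
  (((fourier (-n)).continuous.comp continuous_snd).aestronglyMeasurable.smul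
    hf).integral_prod_right'

theorem stronglyMeasurable_fiberFourierCoeff {f : AddCircle T × AddCircle T → ℂ}
    (hf : StronglyMeasurable f) (n : ℤ) : StronglyMeasurable (fiberFourierCoeff f n) :=
  (((fourier (-n)).continuous.comp continuous_snd).stronglyMeasurable.smul hf).integral_prod_right'

theorem memLp_fiberFourierCoeff {f : AddCircle T × AddCircle T → ℂ}
    (hf : MemLp f 2 (haarAddCircle.prod haarAddCircle)) (n : ℤ) :
    MemLp (fiberFourierCoeff f n) 2 haarAddCircle := by
  have hmeas := aestronglyMeasurable_fiberFourierCoeff hf.1 n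
  have hsq := (memLp_two_iff_integrable_sq_norm hf.1).mp hf
  refine (memLp_two_iff_integrable_sq_norm hmeas).mpr
    (hsq.integral_prod_left.mono' (hmeas.norm.pow 2) ?_)
  filter_upwards [hf.two_prod_right_ae] with y hy
  rw [Real.norm_of_nonneg (by positivity)]
  exact sq_norm_fourierCoeff_le hy n

theorem fiberFourierCoeff_ae_eq_fourier_mul_comp_add {f : AddCircle T × AddCircle T → ℂ}
    {α : AddCircle T} (hinv : (fun p : AddCircle T × AddCircle T => f (p.1 + α, p.2 + p.1))
      =ᵐ[haarAddCircle.prod haarAddCircle] f) (n : ℤ) :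
    fiberFourierCoeff f n =ᵐ[haarAddCircle]
      fun y => fourier n y * fiberFourierCoeff f n (y + α) := by
  filter_upwards [Measure.ae_ae_of_ae_prod hinv] with y hy
  calc fiberFourierCoeff f n y
      _ = fourierCoeff (fun z => f (y + α, z + y)) n :=
        congrFun (fourierCoeff_congr_ae (hy.mono fun z hz => hz.symm)) n
      _ = fourier n y * fiberFourierCoeff f n (y + α) :=
        fourierCoeff_comp_add_right (fun z => f (y + α, z)) y n

theorem ae_eq_fiberFourierCoeff_zero_comp_fst {f : AddCircle T × AddCircle T → ℂ}
    (hfm : StronglyMeasurable f) (hf : MemLp f 2 (haarAddCircle.prod haarAddCircle))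
    (h : ∀ n ≠ 0, fiberFourierCoeff f n =ᵐ[haarAddCircle] 0) :
    f =ᵐ[haarAddCircle.prod haarAddCircle] fun p => fiberFourierCoeff f 0 p.1 := by
  have hvanish : ∀ᵐ y ∂haarAddCircle, ∀ n ≠ 0, fiberFourierCoeff f n y = 0 := by
    rw [ae_all_iff]
    intro n
    rcases eq_or_ne n 0 with rfl | hn
    · exact ae_of_all _ fun _ h0 => absurd rfl h0
    · filter_upwards [h n hn] with y hy _ using hy
  have hfiber :
      ∀ᵐ y ∂haarAddCircle, ∀ᵐ z ∂haarAddCircle, f (y, z) = fiberFourierCoeff f 0 y := by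
    filter_upwards [hvanish, hf.two_prod_right_ae] with y hy hL2
    exact ae_eq_const_of_fourierCoeff_eq_zero hL2 hy
  refine (Measure.ae_prod_iff_ae_ae (hfm.measurableSet_eq_fun ?_)).mpr hfiber
  exact (stronglyMeasurable_fiberFourierCoeff hfm 0).comp_measurable measurable_fst

theorem exists_ae_eq_comp_fst_of_skew_invariant {f : AddCircle T × AddCircle T → ℂ}
    (hf : MemLp f 2 (haarAddCircle.prod haarAddCircle))
    {α : AddCircle T} (hinv : (fun p : AddCircle T × AddCircle T => f (p.1 + α, p.2 + p.1))
      =ᵐ[haarAddCircle.prod haarAddCircle] f) :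
    ∃ g : AddCircle T → ℂ, MemLp g 2 haarAddCircle ∧
      (fun y => g (y + α)) =ᵐ[haarAddCircle] g ∧
      f =ᵐ[haarAddCircle.prod haarAddCircle] fun p => g p.1 := by
  -- a strongly measurable representative makes `{p | f' p = g p.1}` measurable
  obtain ⟨f', hf'm, hff'⟩ := hf.1
  have hf' : MemLp f' 2 _ := hf.ae_eq hff'
  have hinv' : (fun p : AddCircle T × AddCircle T => f' (p.1 + α, p.2 + p.1))
      =ᵐ[haarAddCircle.prod haarAddCircle] f' :=
    ((measurePreserving_skewAddRight _ α).quasiMeasurePreserving.ae_eq hff').symm.trans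
      (hinv.trans hff')
  have htwist := fiberFourierCoeff_ae_eq_fourier_mul_comp_add hinv'
  refine ⟨fiberFourierCoeff f' 0, memLp_fiberFourierCoeff hf' 0, ?_, hff'.trans ?_⟩
  · filter_upwards [htwist 0] with y hy
    rw [hy, fourier_zero, one_mul]
  · exact ae_eq_fiberFourierCoeff_zero_comp_fst hf'm hf' fun n hn =>
      ae_eq_zero_of_ae_eq_fourier_mul_comp_add_right (memLp_fiberFourierCoeff hf' n) hn α
        (htwist n)

end AddCircle

theorem UnitAddCircle.volume_eq_haarAddCircle :
    (volume : Measure UnitAddCircle) = AddCircle.haarAddCircle := by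
  simp [AddCircle.volume_eq_smul_haarAddCircle]

/-- The skew torus map `(y,z) ↦ (y + α, z + y)` on `𝕋²` preserves the
Haar probability measure, and every `L²`-function invariant under it factors (a.e.)
through the first coordinate via a rotation-invariant `L²`-function on `𝕋`; i.e. the skew
torus is an ergodic extension of the rotation by `α`. -/
theorem skew_torus_ergodic_extension (α : UnitAddCircle) :
    MeasurePreserving
      (fun p : UnitAddCircle × UnitAddCircle => (p.1 + α, p.2 + p.1))
      volume volume ∧
    ∀ f : UnitAddCircle × UnitAddCircle → ℂ, MemLp f 2 volume →
      (fun p : UnitAddCircle × UnitAddCircle => f (p.1 + α, p.2 + p.1)) =ᵐ[volume] f →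
      ∃ g : UnitAddCircle → ℂ, MemLp g 2 volume ∧
        (fun y => g (y + α)) =ᵐ[volume] g ∧
        f =ᵐ[volume] fun p => g p.1 := by
  rw [Measure.volume_eq_prod, UnitAddCircle.volume_eq_haarAddCircle]
  exact ⟨measurePreserving_skewAddRight _ α,
    fun _ hf hinv => AddCircle.exists_ae_eq_comp_fst_of_skew_invariant hf hinv⟩
end
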